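/- arXiv:2112.07682 — 10 statements merged into one kernel-verified Lean document; each statement's English description precedes it below -/
import Mathlib

section
/- Let f and g be polynomials in ℂ[s,t] satisfying 4f³ + 27g² = 0. Then there exists a polynomial h ∈ ℂ[s,t] such that f = −3h² and g = 2h³. -/
/-!
With `a = -12 f` and `b = 108 g` the relation reads `a ^ 3 = b ^ 2`. Then `a ^ 2 ∣ b ^ 2`, so
`a ∣ b` because `ℂ[s,t]` is integrally closed (it is a UFD); writing `b = a * c` and cancelling
`a ^ 2` gives `a = c ^ 2` and `b = c ^ 3`, and `h = c / 6` works.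
-/

section IntegrallyClosed

variable {R : Type*} [CommRing R] [IsDomain R] [IsIntegrallyClosed R]

theorem exists_eq_sq_and_eq_cube_of_cube_eq_sq {a b : R} (hab : a ^ 3 = b ^ 2) :
    ∃ c : R, a = c ^ 2 ∧ b = c ^ 3 := by
  rcases eq_or_ne a 0 with rfl | ha
  · exact ⟨0, by simp, by simpa using hab.symm⟩
  have hsq : a ^ 2 ∣ b ^ 2 := ⟨a, by rw [← hab]; ring⟩
  obtain ⟨c, rfl⟩ := (IsIntegrallyClosed.pow_dvd_pow_iff two_ne_zero).mp hsq
  have hac : a = c ^ 2 :=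
    mul_left_cancel₀ (pow_ne_zero 2 ha) (by linear_combination hab)
  exact ⟨c, hac, by rw [hac]; ring⟩

theorem exists_eq_neg_three_mul_sq_and_eq_two_mul_cube (h6 : IsUnit (6 : R)) {f g : R}
    (hfg : 4 * f ^ 3 + 27 * g ^ 2 = 0) :
    ∃ h : R, f = -3 * h ^ 2 ∧ g = 2 * h ^ 3 := by
  obtain ⟨c, hf, hg⟩ := exists_eq_sq_and_eq_cube_of_cube_eq_sq
    (a := -12 * f) (b := 108 * g) (by linear_combination -432 * hfg)
  obtain ⟨u, hu⟩ := h6.exists_left_inv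
  refine ⟨u * c, ?_, ?_⟩
  · linear_combination (-(f * (1 + 6 * u))) * hu - 3 * u ^ 2 * hf
  · linear_combination (-(g * (1 + 6 * u + 36 * u ^ 2))) * hu + 2 * u ^ 3 * hg

end IntegrallyClosed

/-- If `f, g ∈ ℂ[s,t]` satisfy `4 f³ + 27 g² = 0`, then there is `h ∈ ℂ[s,t]`
with `f = -3 h²` and `g = 2 h³`. -/
theorem stmt_0 (f g : MvPolynomial (Fin 2) ℂ)
    (h : 4 * f ^ 3 + 27 * g ^ 2 = 0) :
    ∃ h' : MvPolynomial (Fin 2) ℂ, f = -3 * h' ^ 2 ∧ g = 2 * h' ^ 3 := by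
  have h6 : IsUnit (6 : MvPolynomial (Fin 2) ℂ) := by
    simpa only [map_ofNat] using (IsUnit.mk0 (6 : ℂ) (by norm_num)).map MvPolynomial.C
  exact exists_eq_neg_three_mul_sq_and_eq_two_mul_cube h6 h
end

section
/- Let h ∈ ℂ[s,t] be a nonzero squarefree polynomial, let f̌ and ǧ be polynomials in ℂ[s,t,e], and let l, m be positive integers. Set f = −3h² + e^l·f̌ and g = 2h³ + e^m·ǧ, and let Δ = 4f³ + 27g². Assume Δ ≠ 0, and let n be the largest integer such that eⁿ divides Δ (one has n ≥ 1). Then h² divides the polynomial in ℂ[s,t] obtained from Δ/eⁿ by setting e = 0. -/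
/-!
Put `A = -12 f`, `B = 108 g` and `H = 6 h`; then `A³ - B² = -432 Δ`, `A(0) = H²` and `B(0) = H³`,
so it suffices to show `H² ∣ D(0)` whenever `A³ - B² = eⁿ D` with `n ≥ 1` and `H` squarefree.

If `A = T² + eᵐ S` with `T(0) = H` and `m ≥ 1`, then `Y = 2T³ + 3T eᵐ S` satisfies
`(Y - 2B)(Y + 2B) = 4(A³ - B²) - e²ᵐ (3T²S² + 4eᵐS³)`, and `(Y + 2B)(0) = 4H³ ≠ 0`, so `Y - 2B`
absorbs the whole power of `e` on the right and `4H³` divides the lowest coefficient of the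
cofactor. While `2m < n` this gives `H ∣ S(0)²`, hence `H ∣ S(0)` by squarefreeness, and
`T + eᵐ S(0)/(2H)` is a square root of `A` to one more order. Once `2m ≥ n` it gives
`4H³ ∣ 4D(0) - 3H² S(0)²·[2m = n]`, whence `H² ∣ D(0)`.
-/

open Polynomial

section CubeSubSquare

variable {R : Type*} [CommRing R]

theorem Polynomial.coeff_zero_dvd_of_mul_eq_X_pow_mul [IsDomain R] {P Q G : R[X]} {k : ℕ}
    (hPQ : P * Q = X ^ k * G) (hQ : Q.coeff 0 ≠ 0) : Q.coeff 0 ∣ G.coeff 0 := by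
  obtain ⟨E, rfl⟩ := prime_X.pow_dvd_of_dvd_mul_right k (mt X_dvd_iff.mp hQ) ⟨G, hPQ⟩
  have hEQ : E * Q = G :=
    mul_left_cancel₀ (pow_ne_zero k X_ne_zero) (by rw [← hPQ, mul_assoc])
  exact ⟨E.coeff 0, by rw [← hEQ, mul_coeff_zero, mul_comm]⟩

theorem four_mul_cube_dvd_of_cube_sub_sq_eq_X_pow_mul [IsDomain R] {H : R} {A B T S D : R[X]}
    {m k : ℕ} (h2 : (2 : R) ≠ 0) (hH : H ≠ 0) (hm : 1 ≤ m) (hk : k ≤ 2 * m)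
    (hT : T.coeff 0 = H) (hB : B.coeff 0 = H ^ 3) (hA : A = T ^ 2 + X ^ m * S)
    (hAB : A ^ 3 - B ^ 2 = X ^ k * D) :
    4 * H ^ 3 ∣ 4 * D.coeff 0 - 3 * H ^ 2 * 0 ^ (2 * m - k) * S.coeff 0 ^ 2 := by
  set Y := 2 * T ^ 3 + 3 * T * (X ^ m * S)
  have hX : (X : R[X]) ^ (2 * m) = X ^ k * X ^ (2 * m - k) := by
    rw [← pow_add, Nat.add_sub_cancel' hk]
  have hfac : (Y - 2 * B) * (Y + 2 * B) =
      X ^ k * (4 * D - X ^ (2 * m - k) * (3 * T ^ 2 * S ^ 2 + 4 * X ^ m * S ^ 3)) := by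
    subst hA
    linear_combination 4 * hAB - (3 * T ^ 2 * S ^ 2 + 4 * X ^ m * S ^ 3) * hX
  have hm0 : (0 : R) ^ m = 0 := zero_pow (by omega)
  simp only [coeff_zero_eq_eval_zero] at hT hB ⊢
  have hsum : (Y + 2 * B).eval 0 = 4 * H ^ 3 := by
    simp only [Y, eval_add, eval_mul, eval_pow, eval_X, eval_ofNat, hm0, hT, hB]
    ring
  have hH3 : 4 * H ^ 3 ≠ 0 :=
    mul_ne_zero (by simpa [show (4 : R) = 2 * 2 by norm_num]) (pow_ne_zero 3 hH)
  have hdvd := coeff_zero_dvd_of_mul_eq_X_pow_mul hfac (by rwa [coeff_zero_eq_eval_zero, hsum])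
  simp only [coeff_zero_eq_eval_zero, hsum, eval_sub, eval_add, eval_mul, eval_pow, eval_X,
    eval_ofNat, hm0, hT] at hdvd
  convert hdvd using 1
  ring

theorem exists_sq_add_X_pow_succ_mul {H : R} {A T S : R[X]} {m : ℕ} (h2 : IsUnit (2 : R))
    (hm : 1 ≤ m) (hT : T.coeff 0 = H) (hA : A = T ^ 2 + X ^ m * S) (hS : H ∣ S.coeff 0) :
    ∃ T' S' : R[X], T'.coeff 0 = H ∧ A = T' ^ 2 + X ^ (m + 1) * S' := by
  obtain ⟨c, hc⟩ : ∃ c, S.coeff 0 = 2 * H * c := by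
    obtain ⟨d, hd⟩ := hS
    obtain ⟨u, hu⟩ := h2.exists_right_inv
    exact ⟨u * d, by rw [hd]; linear_combination (-H * d) * hu⟩
  have hm0 : (0 : R) ^ m = 0 := zero_pow (by omega)
  obtain ⟨S', hS'⟩ : X ∣ S - 2 * C c * T - C c ^ 2 * X ^ m := by
    rw [X_dvd_iff]
    simp only [coeff_zero_eq_eval_zero] at hT hc ⊢
    simp [hT, hc, hm0]
    ring
  refine ⟨T + C c * X ^ m, S', ?_, ?_⟩
  · simp only [coeff_zero_eq_eval_zero] at hT ⊢
    simp [hT, hm0]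
  · rw [hA]
    linear_combination X ^ m * hS'

variable [IsDomain R] [DecompositionMonoid R] {H : R} {A B D : R[X]} {n : ℕ}

theorem exists_sq_add_X_pow_mul_of_cube_sub_sq (h2 : IsUnit (2 : R)) (h3 : IsUnit (3 : R))
    (hH : Squarefree H) (hA : A.coeff 0 = H ^ 2) (hB : B.coeff 0 = H ^ 3)
    (hAB : A ^ 3 - B ^ 2 = X ^ n * D) {m : ℕ} (hm : 1 ≤ m) (hmn : 2 * m ≤ n + 1) :
    ∃ T S : R[X], T.coeff 0 = H ∧ A = T ^ 2 + X ^ m * S := by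
  induction m, hm using Nat.le_induction with
  | base =>
    obtain ⟨S, hS⟩ : X ∣ A - C H ^ 2 :=
      X_dvd_iff.mpr (by rw [coeff_sub, hA, ← C_pow, coeff_C_zero, sub_self])
    exact ⟨C H, S, coeff_C_zero, by rw [pow_one, ← hS]; ring⟩
  | succ m hm ih =>
    obtain ⟨T, S, hT, hAS⟩ := ih (by omega)
    have hAB' : A ^ 3 - B ^ 2 = X ^ (2 * m) * (X ^ (n - 2 * m) * D) := by
      rw [hAB, ← mul_assoc, ← pow_add, Nat.add_sub_cancel' (by omega)]
    have hstep :=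
      four_mul_cube_dvd_of_cube_sub_sq_eq_X_pow_mul h2.ne_zero hH.ne_zero hm le_rfl hT hB hAS hAB'
    rw [Nat.sub_self, pow_zero, mul_one, coeff_X_pow_mul', if_neg (by omega), mul_zero,
      zero_sub, dvd_neg, show 4 * H ^ 3 = H ^ 2 * (4 * H) by ring,
      show 3 * H ^ 2 * S.coeff 0 ^ 2 = H ^ 2 * (3 * S.coeff 0 ^ 2) by ring,
      mul_dvd_mul_iff_left (pow_ne_zero 2 hH.ne_zero)] at hstep
    have hS2 : H ∣ S.coeff 0 ^ 2 := h3.dvd_mul_left.mp ((dvd_mul_left H 4).trans hstep)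
    exact exists_sq_add_X_pow_succ_mul h2 hm hT hAS ((hH.dvd_pow_iff_dvd two_ne_zero).mp hS2)

theorem sq_dvd_coeff_zero_of_cube_sub_sq_eq_X_pow_mul (h2 : IsUnit (2 : R))
    (h3 : IsUnit (3 : R)) (hH : Squarefree H) (hn : 1 ≤ n) (hA : A.coeff 0 = H ^ 2)
    (hB : B.coeff 0 = H ^ 3) (hAB : A ^ 3 - B ^ 2 = X ^ n * D) : H ^ 2 ∣ D.coeff 0 := by
  obtain ⟨T, S, hT, hAS⟩ := exists_sq_add_X_pow_mul_of_cube_sub_sq h2 h3 hH hA hB hAB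
    (m := (n + 1) / 2) (by omega) (by omega)
  have hstep := four_mul_cube_dvd_of_cube_sub_sq_eq_X_pow_mul h2.ne_zero hH.ne_zero
    (by omega) (by omega) hT hB hAS hAB
  have h4D : H ^ 2 ∣ 4 * D.coeff 0 :=
    (dvd_sub_left (dvd_mul_of_dvd_left (dvd_mul_of_dvd_left (dvd_mul_left _ _) _) _)).mp
      (((pow_dvd_pow H (by norm_num)).mul_left 4).trans hstep)
  rwa [show (4 : R) = 2 * 2 by norm_num, mul_assoc, h2.dvd_mul_left, h2.dvd_mul_left] at h4D

end CubeSubSquare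

theorem stmt_1_general (h : MvPolynomial (Fin 2) ℂ) (hsq : Squarefree h)
    (fc gc : Polynomial (MvPolynomial (Fin 2) ℂ)) (l m : ℕ) (hl : 0 < l) (hm : 0 < m)
    (f g Δ : Polynomial (MvPolynomial (Fin 2) ℂ))
    (hf : f = Polynomial.C (-3 * h ^ 2) + Polynomial.X ^ l * fc)
    (hg : g = Polynomial.C (2 * h ^ 3) + Polynomial.X ^ m * gc)
    (hΔ : Δ = 4 * f ^ 3 + 27 * g ^ 2)
    (n : ℕ) (Δ' : Polynomial (MvPolynomial (Fin 2) ℂ))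
    (hfac : Δ = Polynomial.X ^ n * Δ')
    (hmax : ¬ (Polynomial.X ^ (n + 1) ∣ Δ)) :
    1 ≤ n ∧ h ^ 2 ∣ Δ'.coeff 0 := by
  have hf0 : f.coeff 0 = -3 * h ^ 2 := by
    rw [hf, coeff_add, coeff_C_zero, coeff_X_pow_mul', if_neg (by omega), add_zero]
  have hg0 : g.coeff 0 = 2 * h ^ 3 := by
    rw [hg, coeff_add, coeff_C_zero, coeff_X_pow_mul', if_neg (by omega), add_zero]
  have hn : 1 ≤ n := by
    refine Nat.one_le_iff_ne_zero.mpr fun hn => hmax ?_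
    rw [hn, zero_add, pow_one, X_dvd_iff, hΔ]
    simp only [coeff_zero_eq_eval_zero] at hf0 hg0 ⊢
    simp [hf0, hg0]
    ring
  have h2 : IsUnit (2 : MvPolynomial (Fin 2) ℂ) := by
    rw [← map_ofNat MvPolynomial.C]; exact (isUnit_iff_ne_zero.mpr two_ne_zero).map _
  have h3 : IsUnit (3 : MvPolynomial (Fin 2) ℂ) := by
    rw [← map_ofNat MvPolynomial.C]; exact (isUnit_iff_ne_zero.mpr three_ne_zero).map _
  have h6 : IsUnit (6 : MvPolynomial (Fin 2) ℂ) := by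
    simpa [show (6 : MvPolynomial (Fin 2) ℂ) = 2 * 3 by norm_num] using h2.mul h3
  have hsq6 : Squarefree (6 * h) := (associated_unit_mul_left h 6 h6).squarefree_iff.mpr hsq
  have hdvd := sq_dvd_coeff_zero_of_cube_sub_sq_eq_X_pow_mul (A := -12 * f) (B := 108 * g)
    (D := -432 * Δ') h2 h3 hsq6 hn (by simp [hf0]; ring) (by simp [hg0]; ring)
    (by rw [← mul_assoc, mul_comm _ (-432 : Polynomial _), mul_assoc, ← hfac, hΔ]; ring)
  refine ⟨hn, ?_⟩
  rwa [show (-432 * Δ').coeff 0 = 2 ^ 4 * 3 ^ 3 * -Δ'.coeff 0 by rw [mul_coeff_zero]; norm_num,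
    mul_pow, (h6.pow 2).mul_left_dvd, ((h2.pow 4).mul (h3.pow 3)).dvd_mul_left, dvd_neg] at hdvd

/-- Let `h ∈ ℂ[s,t]` be nonzero and squarefree, `f̌, ǧ ∈ ℂ[s,t][e]`, and `l, m ≥ 1`.
Set `f = -3h² + eˡ·f̌`, `g = 2h³ + eᵐ·ǧ`, `Δ = 4f³ + 27g² ≠ 0`, and let `n` be the
largest integer with `eⁿ ∣ Δ`, with `Δ = eⁿ·Δ'`. Then `n ≥ 1` and `h²` divides the
polynomial obtained from `Δ'` by setting `e = 0` (i.e. its constant coefficient). -/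
theorem stmt_1 (h : MvPolynomial (Fin 2) ℂ) (hh0 : h ≠ 0) (hsq : Squarefree h)
    (fc gc : Polynomial (MvPolynomial (Fin 2) ℂ)) (l m : ℕ) (hl : 0 < l) (hm : 0 < m)
    (f g Δ : Polynomial (MvPolynomial (Fin 2) ℂ))
    (hf : f = Polynomial.C (-3 * h ^ 2) + Polynomial.X ^ l * fc)
    (hg : g = Polynomial.C (2 * h ^ 3) + Polynomial.X ^ m * gc)
    (hΔ : Δ = 4 * f ^ 3 + 27 * g ^ 2)
    (hΔ0 : Δ ≠ 0)
    (n : ℕ) (Δ' : Polynomial (MvPolynomial (Fin 2) ℂ))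
    (hfac : Δ = Polynomial.X ^ n * Δ')
    (hmax : ¬ (Polynomial.X ^ (n + 1) ∣ Δ)) :
    1 ≤ n ∧ h ^ 2 ∣ Δ'.coeff 0 :=
  stmt_1_general h hsq fc gc l m hl hm f g Δ hf hg hΔ n Δ' hfac hmax
end

section
/- Fix integers P ≥ 2 and N ≥ 1, let φ_P : ℂ[u,s,t] → ℂ[e₀,…,e_P,s,t] be the ℂ-algebra homomorphism with u ↦ e₀e₁⋯e_P, s ↦ s·∏_{q=0}^{P} e_q^q, t ↦ t, and let E_N := ∏_{q=0}^{P} e_q^{N·q}. Let D ∈ ℂ[u,s,t] be nonzero such that every monomial u^μ s^σ t^τ occurring in D with σ < N satisfies μ ≥ P·(N−σ), and suppose min{μ+σ : u^μ s^σ t^τ occurs in D} = N. Then D contains a monomial c·u⁰·s^N·t^τ with c ≠ 0; consequently φ_P(D)/E_N contains a monomial whose exponent in every e_q is zero, so for every p ∈ {0,…,P} the coordinate e_p does not divide φ_P(D)/E_N, and the restriction of φ_P(D)/E_N to any locus e_p = 0, or to e_p = e_{p+1} = 0, is nonzero. -/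
/-- The blowup substitution `φ_P : ℂ[u,s,t] → ℂ[e₀,…,e_P,s,t]`,
`u ↦ e₀⋯e_P`, `s ↦ s·∏ e_q^q`, `t ↦ t`. -/
noncomputable def phi (P : ℕ) :
    MvPolynomial (Fin 3) ℂ →ₐ[ℂ] MvPolynomial (Fin (P + 1) ⊕ Fin 2) ℂ :=
  MvPolynomial.aeval
    ![∏ q : Fin (P + 1), MvPolynomial.X (Sum.inl q),
      MvPolynomial.X (Sum.inr 0) * ∏ q : Fin (P + 1), MvPolynomial.X (Sum.inl q) ^ (q : ℕ),
      MvPolynomial.X (Sum.inr 1)]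

/-- The monomial `E_N = ∏_{q=0}^{P} e_q^{N·q}`. -/
noncomputable def EN (P N : ℕ) : MvPolynomial (Fin (P + 1) ⊕ Fin 2) ℂ :=
  ∏ q : Fin (P + 1), MvPolynomial.X (Sum.inl q) ^ (N * (q : ℕ))

open MvPolynomial

namespace Stmt4

/-- exponent map for `phi` -/
noncomputable def psi (P : ℕ) (d : Fin 3 →₀ ℕ) : (Fin (P + 1) ⊕ Fin 2) →₀ ℕ :=
  Finsupp.equivFunOnFinite.symm
    (Sum.elim (fun q : Fin (P + 1) => d 0 + (q : ℕ) * d 1) ![d 1, d 2])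

@[simp] lemma psi_inl (P : ℕ) (d : Fin 3 →₀ ℕ) (q : Fin (P + 1)) :
    psi P d (Sum.inl q) = d 0 + (q : ℕ) * d 1 := rfl

@[simp] lemma psi_inr0 (P : ℕ) (d : Fin 3 →₀ ℕ) :
    psi P d (Sum.inr 0) = d 1 := rfl

@[simp] lemma psi_inr1 (P : ℕ) (d : Fin 3 →₀ ℕ) :
    psi P d (Sum.inr 1) = d 2 := rfl

/-- exponent of `EN` -/
noncomputable def Ee (P N : ℕ) : (Fin (P + 1) ⊕ Fin 2) →₀ ℕ :=
  Finsupp.equivFunOnFinite.symm (Sum.elim (fun q : Fin (P + 1) => N * (q : ℕ)) 0)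

@[simp] lemma Ee_inl (P N : ℕ) (q : Fin (P + 1)) : Ee P N (Sum.inl q) = N * (q : ℕ) := rfl
@[simp] lemma Ee_inr (P N : ℕ) (j : Fin 2) : Ee P N (Sum.inr j) = 0 := rfl

lemma psi_inj (P : ℕ) : Function.Injective (psi P) := by
  intro a b h
  have h0 : a 0 = b 0 := by
    have := congrArg (fun f => f (Sum.inl (0 : Fin (P + 1)))) h
    simpa using this
  have h1 : a 1 = b 1 := by
    have := congrArg (fun f => f (Sum.inr (0 : Fin 2))) h
    simpa using this
  have h2 : a 2 = b 2 := by
    have := congrArg (fun f => f (Sum.inr (1 : Fin 2))) h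
    simpa using this
  ext i
  fin_cases i <;> assumption

lemma EN_eq (P N : ℕ) : EN P N = monomial (Ee P N) 1 := by
  rw [EN, monomial_eq, Finsupp.prod_fintype _ _ (fun i => pow_zero _)]
  rw [Fintype.prod_sum_type]
  simp

lemma phi_monomial (P : ℕ) (d : Fin 3 →₀ ℕ) (c : ℂ) :
    phi P (monomial d c) = monomial (psi P d) c := by
  rw [phi, aeval_monomial, monomial_eq,
    Finsupp.prod_fintype _ _ (fun i => pow_zero _),
    Finsupp.prod_fintype _ _ (fun i => pow_zero _),
    Fin.prod_univ_three, Fintype.prod_sum_type, Fin.prod_univ_two]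
  simp only [Matrix.cons_val_zero, Matrix.cons_val_one, Matrix.head_cons, psi_inl, psi_inr0,
    psi_inr1, Matrix.cons_val_two, Matrix.tail_cons, algebraMap_eq]
  have hprod : (∏ q : Fin (P + 1), (X (Sum.inl q) : MvPolynomial (Fin (P + 1) ⊕ Fin 2) ℂ)) ^ d 0
      * (∏ q : Fin (P + 1), (X (Sum.inl q) : MvPolynomial (Fin (P + 1) ⊕ Fin 2) ℂ) ^ (q : ℕ)) ^ d 1
      = ∏ q : Fin (P + 1), (X (Sum.inl q) : MvPolynomial (Fin (P + 1) ⊕ Fin 2) ℂ) ^ (d 0 + (q : ℕ) * d 1) := by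
    rw [← Finset.prod_pow, ← Finset.prod_pow, ← Finset.prod_mul_distrib]
    exact Finset.prod_congr rfl fun q _ => by rw [← pow_mul, ← pow_add]
  rw [mul_pow, ← hprod]
  ring

noncomputable def Q0 (P N : ℕ) (D : MvPolynomial (Fin 3) ℂ) :
    MvPolynomial (Fin (P + 1) ⊕ Fin 2) ℂ :=
  ∑ d ∈ D.support, monomial (psi P d - Ee P N) (coeff d D)

lemma phi_eq_EN_mul_Q0 (P N : ℕ) (D : MvPolynomial (Fin 3) ℂ)
    (hE : ∀ d ∈ D.support, Ee P N ≤ psi P d) :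
    phi P D = EN P N * Q0 P N D := by
  conv_lhs => rw [D.as_sum]
  rw [map_sum, Q0, Finset.mul_sum]
  refine Finset.sum_congr rfl fun d hd => ?_
  rw [phi_monomial, EN_eq, monomial_mul, one_mul,
    add_tsub_cancel_of_le (hE d hd)]

lemma coeff_Q0 (P N : ℕ) (D : MvPolynomial (Fin 3) ℂ)
    (hE : ∀ d ∈ D.support, Ee P N ≤ psi P d)
    (d₀ : Fin 3 →₀ ℕ) (hd₀ : d₀ ∈ D.support) :
    coeff (psi P d₀ - Ee P N) (Q0 P N D) = coeff d₀ D := by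
  rw [Q0, coeff_sum]
  rw [Finset.sum_eq_single d₀]
  · rw [coeff_monomial, if_pos rfl]
  · intro b hb hne
    rw [coeff_monomial, if_neg]
    intro heq
    apply hne
    apply psi_inj P
    have : psi P b - Ee P N + Ee P N = psi P d₀ - Ee P N + Ee P N := by rw [heq]
    rwa [tsub_add_cancel_of_le (hE b hb), tsub_add_cancel_of_le (hE d₀ hd₀)] at this
  · intro h; exact absurd hd₀ h

/-- coefficient under a partial kill substitution -/
lemma coeff_aeval_kill {ι : Type*} (g : ι → MvPolynomial ι ℂ) (m : ι →₀ ℕ)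
    (hg : ∀ i, g i = X i ∨ (g i = 0 ∧ m i = 0)) (F : MvPolynomial ι ℂ) :
    coeff m (aeval g F) = coeff m F := by
  classical
  conv_lhs => rw [F.as_sum]
  conv_rhs => rw [F.as_sum]
  rw [map_sum, coeff_sum, coeff_sum]
  refine Finset.sum_congr rfl fun m' _ => ?_
  by_cases h : ∀ i ∈ m'.support, g i = X i
  · rw [aeval_monomial]
    rw [Finsupp.prod_congr (fun i hi => by rw [h i hi]) ]
    rw [algebraMap_eq, ← monomial_eq]
  · push_neg at h
    obtain ⟨i, hi, hgi⟩ := h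
    rcases hg i with h' | ⟨h0, hm0⟩
    · exact absurd h' hgi
    · rw [aeval_monomial, Finsupp.prod,
        Finset.prod_eq_zero hi (by rw [h0, zero_pow (Finsupp.mem_support_iff.mp hi)]),
        mul_zero, coeff_zero, coeff_monomial, if_neg]
      intro heq
      exact Finsupp.mem_support_iff.mp hi (heq ▸ hm0)

end Stmt4

/-- For `P ≥ 2`, `N ≥ 1`, if `D ≠ 0` has every monomial with `σ < N` satisfying
`μ ≥ P(N-σ)` and the minimum of `μ+σ` over the monomials of `D` equals `N`, then
`D` contains a nonzero monomial `c·u⁰·s^N·t^τ`, the quotient `φ_P(D)/E_N`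
contains a monomial free of all `e_q`, no `e_p` divides it, and its restriction
to any locus `e_p = 0` or `e_p = e_{p+1} = 0` is nonzero. -/
theorem stmt_4 (P N : ℕ) (hP : 2 ≤ P) (hN : 1 ≤ N)
    (D : MvPolynomial (Fin 3) ℂ) (hD0 : D ≠ 0)
    (hD : ∀ d ∈ D.support, d 1 < N → P * (N - d 1) ≤ d 0)
    (hminLB : ∀ d ∈ D.support, N ≤ d 0 + d 1)
    (hminAtt : ∃ d ∈ D.support, d 0 + d 1 = N) :
    (∃ d ∈ D.support, d 0 = 0 ∧ d 1 = N) ∧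
    EN P N ∣ phi P D ∧
    ∀ Q : MvPolynomial (Fin (P + 1) ⊕ Fin 2) ℂ, phi P D = EN P N * Q →
      (∃ d ∈ Q.support, ∀ q : Fin (P + 1), d (Sum.inl q) = 0) ∧
      (∀ p : Fin (P + 1), ¬ (MvPolynomial.X (Sum.inl p) ∣ Q)) ∧
      (∀ p : Fin (P + 1),
        MvPolynomial.aeval
          (fun i : Fin (P + 1) ⊕ Fin 2 =>
            if i = Sum.inl p then (0 : MvPolynomial (Fin (P + 1) ⊕ Fin 2) ℂ)
            else MvPolynomial.X i) Q ≠ 0) ∧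
      (∀ p p' : Fin (P + 1), (p' : ℕ) = (p : ℕ) + 1 →
        MvPolynomial.aeval
          (fun i : Fin (P + 1) ⊕ Fin 2 =>
            if i = Sum.inl p ∨ i = Sum.inl p' then (0 : MvPolynomial (Fin (P + 1) ⊕ Fin 2) ℂ)
            else MvPolynomial.X i) Q ≠ 0) := by
  classical
  obtain ⟨d₀, hd₀, hsum⟩ := hminAtt
  have hd₀01 : d₀ 0 = 0 ∧ d₀ 1 = N := by
    rcases lt_or_ge (d₀ 1) N with h | h
    · have h2 := hD d₀ hd₀ h
      have h3 : 2 * (N - d₀ 1) ≤ d₀ 0 := le_trans (Nat.mul_le_mul_right _ hP) h2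
      omega
    · omega
  have hE : ∀ d ∈ D.support, Stmt4.Ee P N ≤ Stmt4.psi P d := by
    intro d hd
    rw [Finsupp.le_def]
    intro i
    rcases i with q | j
    · rw [Stmt4.Ee_inl, Stmt4.psi_inl]
      rcases lt_or_ge (d 1) N with h | h
      · have h2 := hD d hd h
        have hq : (q : ℕ) ≤ P := Fin.is_le q
        calc N * (q : ℕ) = (q : ℕ) * N := mul_comm _ _
          _ ≤ (q : ℕ) * (N - d 1) + (q : ℕ) * d 1 := by
              rw [← Nat.mul_add]; exact Nat.mul_le_mul_left _ (by omega)
          _ ≤ P * (N - d 1) + (q : ℕ) * d 1 :=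
              Nat.add_le_add_right (Nat.mul_le_mul_right _ hq) _
          _ ≤ d 0 + (q : ℕ) * d 1 := Nat.add_le_add_right h2 _
      · calc N * (q : ℕ) = (q : ℕ) * N := mul_comm _ _
          _ ≤ (q : ℕ) * d 1 := Nat.mul_le_mul_left _ h
          _ ≤ d 0 + (q : ℕ) * d 1 := Nat.le_add_left _ _
    · rw [Stmt4.Ee_inr]; exact Nat.zero_le _
  have hQ0 := Stmt4.phi_eq_EN_mul_Q0 P N D hE
  refine ⟨⟨d₀, hd₀, hd₀01⟩, ⟨Stmt4.Q0 P N D, hQ0⟩, ?_⟩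
  intro Q hQ
  have hENne : EN P N ≠ 0 := by
    rw [Stmt4.EN_eq]
    intro h
    exact one_ne_zero ((MvPolynomial.monomial_eq_zero).mp h)
  have hQeq : Q = Stmt4.Q0 P N D := mul_left_cancel₀ hENne (hQ.symm.trans hQ0)
  subst hQeq
  set m₀ := Stmt4.psi P d₀ - Stmt4.Ee P N with hm₀
  have hm₀inl : ∀ q : Fin (P + 1), m₀ (Sum.inl q) = 0 := by
    intro q
    rw [hm₀, Finsupp.tsub_apply, Stmt4.psi_inl, Stmt4.Ee_inl, hd₀01.1, hd₀01.2, mul_comm]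
    omega
  have hcoeff : coeff m₀ (Stmt4.Q0 P N D) = coeff d₀ D := Stmt4.coeff_Q0 P N D hE d₀ hd₀
  have hcne : coeff d₀ D ≠ 0 := MvPolynomial.mem_support_iff.mp hd₀
  have hm₀mem : m₀ ∈ (Stmt4.Q0 P N D).support :=
    MvPolynomial.mem_support_iff.mpr (by rw [hcoeff]; exact hcne)
  have hres1 : ∀ p : Fin (P + 1),
      aeval (fun i : Fin (P + 1) ⊕ Fin 2 =>
        if i = Sum.inl p then (0 : MvPolynomial (Fin (P + 1) ⊕ Fin 2) ℂ) else X i)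
        (Stmt4.Q0 P N D) ≠ 0 := by
    intro p hzero
    have hk := Stmt4.coeff_aeval_kill
      (fun i : Fin (P + 1) ⊕ Fin 2 =>
        if i = Sum.inl p then (0 : MvPolynomial (Fin (P + 1) ⊕ Fin 2) ℂ) else X i) m₀
      (fun i => by
        by_cases h : i = Sum.inl p
        · exact Or.inr ⟨if_pos h, by rw [h]; exact hm₀inl p⟩
        · exact Or.inl (if_neg h)) (Stmt4.Q0 P N D)
    rw [hzero, coeff_zero, hcoeff] at hk
    exact hcne hk.symm
  have hres2 : ∀ p p' : Fin (P + 1),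
      aeval (fun i : Fin (P + 1) ⊕ Fin 2 =>
        if i = Sum.inl p ∨ i = Sum.inl p' then (0 : MvPolynomial (Fin (P + 1) ⊕ Fin 2) ℂ)
        else X i) (Stmt4.Q0 P N D) ≠ 0 := by
    intro p p' hzero
    have hk := Stmt4.coeff_aeval_kill
      (fun i : Fin (P + 1) ⊕ Fin 2 =>
        if i = Sum.inl p ∨ i = Sum.inl p' then (0 : MvPolynomial (Fin (P + 1) ⊕ Fin 2) ℂ)
        else X i) m₀
      (fun i => by
        by_cases h : i = Sum.inl p ∨ i = Sum.inl p'
        · refine Or.inr ⟨if_pos h, ?_⟩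
          rcases h with h | h
          · rw [h]; exact hm₀inl p
          · rw [h]; exact hm₀inl p'
        · exact Or.inl (if_neg h)) (Stmt4.Q0 P N D)
    rw [hzero, coeff_zero, hcoeff] at hk
    exact hcne hk.symm
  refine ⟨⟨m₀, hm₀mem, hm₀inl⟩, ?_, hres1, fun p p' _ => hres2 p p'⟩
  rintro p ⟨R, hR⟩
  apply hres1 p
  rw [hR, map_mul, aeval_X, if_pos rfl, zero_mul]
end

section
/- Fix an integer P ≥ 2. Let f, g ∈ ℂ[u,s,t] be homogeneous of degrees 8 and 12, respectively, in the variables (s,t). Assume every monomial u^μ s^σ t^{8−σ} of f with σ < 4 has μ ≥ P·(4−σ), and every monomial u^μ s^σ t^{12−σ} of g with σ < 6 has μ ≥ P·(6−σ). Let A be the coefficient of u⁰s⁴t⁴ in f, B the coefficient of u⁰s⁶t⁶ in g, and Δ := 4f³ + 27g². Then: (i) every monomial u^μ s^σ t^{24−σ} of Δ with σ < 12 has μ ≥ P·(12−σ); (ii) the coefficient of u⁰s¹²t¹² in Δ equals 4A³ + 27B²; and (iii) if Δ ≠ 0, then min{μ+σ over the monomials of Δ} = 12 when 4A³ + 27B²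 ≠ 0, while min{μ+σ over the monomials of Δ} ≥ 13 when 4A³ + 27B² = 0. -/
/-- The exponent vector of the monomial `u^μ s^σ t^τ` of `ℂ[u,s,t]`. -/
noncomputable def mono3 (μ σ τ : ℕ) : Fin 3 →₀ ℕ :=
  Finsupp.equivFunOnFinite.symm ![μ, σ, τ]

/-!
With the weight `μ + P σ` the hypotheses on `f` and `g` say that all their monomials have
weight at least `4P` and `6P`; such lower bounds add up under products, which gives (i).
With the weight `μ + σ`, homogeneity and `P ≥ 2` make `u⁰s⁴t⁴` (resp. `u⁰s⁶t⁶`) strictly lighter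
than every other monomial of `f` (resp. `g`). A strictly lightest monomial is multiplicative, so
`u⁰s¹²t¹²` is strictly lightest in `f³` and `g²`, with coefficients `A³` and `B²`; this gives
(ii) and (iii).
-/

open Finsupp (weight)

namespace MvPolynomial

variable {σ R : Type*} [CommSemiring R] (w : σ → ℕ)

theorem support_C_mul_add_C_mul_subset [DecidableEq σ] (a b : R) (p q : MvPolynomial σ R) :
    (C a * p + C b * q).support ⊆ p.support ∪ q.support := by
  refine support_add.trans (Finset.union_subset_union ?_ ?_) <;>
    simpa only [C_mul'] using support_smul

theorem le_weight_of_mem_support_mul {p q : MvPolynomial σ R} {m n : ℕ}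
    (hp : ∀ d ∈ p.support, m ≤ weight w d) (hq : ∀ d ∈ q.support, n ≤ weight w d) :
    ∀ d ∈ (p * q).support, m + n ≤ weight w d := by
  classical
  intro d hd
  obtain ⟨a, ha, b, hb, rfl⟩ := Finset.mem_add.mp (support_mul p q hd)
  rw [map_add]
  exact add_le_add (hp a ha) (hq b hb)

theorem le_weight_of_mem_support_pow {p : MvPolynomial σ R} {n : ℕ}
    (hp : ∀ d ∈ p.support, n ≤ weight w d) (k : ℕ) :
    ∀ d ∈ (p ^ k).support, k * n ≤ weight w d := by
  induction k with
  | zero => simp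
  | succ k ih =>
    rw [pow_succ, add_one_mul]
    exact le_weight_of_mem_support_mul w ih hp

def IsWeightedLowest (e : σ →₀ ℕ) (p : MvPolynomial σ R) : Prop :=
  ∀ d ∈ p.support, d ≠ e → weight w e < weight w d

namespace IsWeightedLowest

variable {w} {e e₁ e₂ : σ →₀ ℕ} {p q : MvPolynomial σ R}

theorem weight_le (hp : IsWeightedLowest w e p) {d : σ →₀ ℕ} (hd : d ∈ p.support) :
    weight w e ≤ weight w d := by
  rcases eq_or_ne d e with rfl | hne
  · exact le_rfl
  · exact (hp d hd hne).le

theorem of_support_subset [DecidableEq σ] {r : MvPolynomial σ R}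
    (h : r.support ⊆ p.support ∪ q.support) (hp : IsWeightedLowest w e p)
    (hq : IsWeightedLowest w e q) : IsWeightedLowest w e r :=
  fun d hd => (Finset.mem_union.mp (h hd)).elim (hp d) (hq d)

theorem weight_add_lt (hp : IsWeightedLowest w e₁ p) (hq : IsWeightedLowest w e₂ q)
    {a b : σ →₀ ℕ} (ha : a ∈ p.support) (hb : b ∈ q.support) (hne : a ≠ e₁ ∨ b ≠ e₂) :
    weight w (e₁ + e₂) < weight w (a + b) := by
  rw [map_add, map_add]
  rcases hne with h | h
  · exact add_lt_add_of_lt_of_le (hp a ha h) (hq.weight_le hb)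
  · exact add_lt_add_of_le_of_lt (hp.weight_le ha) (hq b hb h)

protected theorem mul (hp : IsWeightedLowest w e₁ p) (hq : IsWeightedLowest w e₂ q) :
    IsWeightedLowest w (e₁ + e₂) (p * q) := by
  classical
  intro d hd hne
  obtain ⟨a, ha, b, hb, rfl⟩ := Finset.mem_add.mp (support_mul p q hd)
  refine hp.weight_add_lt hq ha hb ?_
  by_contra! h
  exact hne (by rw [h.1, h.2])

theorem coeff_mul (hp : IsWeightedLowest w e₁ p) (hq : IsWeightedLowest w e₂ q) :
    coeff (e₁ + e₂) (p * q) = coeff e₁ p * coeff e₂ q := by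
  classical
  rw [MvPolynomial.coeff_mul]
  refine Finset.sum_eq_single (e₁, e₂) (fun ⟨a, b⟩ hab hne => ?_)
    (fun h => (h (Finset.HasAntidiagonal.mem_antidiagonal.mpr rfl)).elim)
  rw [Finset.HasAntidiagonal.mem_antidiagonal] at hab
  by_contra h0
  have ha : a ∈ p.support := mem_support_iff.mpr (left_ne_zero_of_mul h0)
  have hb : b ∈ q.support := mem_support_iff.mpr (right_ne_zero_of_mul h0)
  have hne' : a ≠ e₁ ∨ b ≠ e₂ := by
    by_contra! h
    exact hne (by rw [h.1, h.2])
  exact (hp.weight_add_lt hq ha hb hne').ne (by rw [hab])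

protected theorem pow (hp : IsWeightedLowest w e p) (k : ℕ) :
    IsWeightedLowest w (k • e) (p ^ k) := by
  classical
  induction k with
  | zero =>
    intro d hd hne
    rw [zero_smul] at hne
    simp [mem_support_iff, coeff_one, Ne.symm hne] at hd
  | succ k ih =>
    rw [pow_succ, succ_nsmul]
    exact ih.mul hp

theorem coeff_pow (hp : IsWeightedLowest w e p) (k : ℕ) :
    coeff (k • e) (p ^ k) = coeff e p ^ k := by
  induction k with
  | zero => simp
  | succ k ih => rw [pow_succ, succ_nsmul, (hp.pow k).coeff_mul hp, ih, pow_succ]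

end IsWeightedLowest

end MvPolynomial

open MvPolynomial

theorem weight_one_c_zero (c : ℕ) (d : Fin 3 →₀ ℕ) : weight ![1, c, 0] d = d 0 + c * d 1 := by
  simp [Finsupp.weight_apply, Finsupp.sum_fintype, Fin.sum_univ_three, mul_comm]

@[simp]
theorem mono3_apply (μ σ τ : ℕ) (i : Fin 3) : mono3 μ σ τ i = ![μ, σ, τ] i := rfl

theorem nsmul_mono3 (k a b c : ℕ) : k • mono3 a b c = mono3 (k * a) (k * b) (k * c) := by
  ext i; fin_cases i <;> simp

theorem imp_mul_sub_le_iff (P k s m : ℕ) : (s < k → P * (k - s) ≤ m) ↔ P * k ≤ m + P * s := by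
  rcases lt_or_ge s k with h | h
  · have := Nat.mul_le_mul_left P h.le
    rw [Nat.mul_sub]
    omega
  · have := Nat.mul_le_mul_left P h
    constructor <;> intro <;> omega

theorem mul_le_weight_of_forall_lt_imp {R : Type*} [CommSemiring R] {P k : ℕ}
    {p : MvPolynomial (Fin 3) R} (hbound : ∀ d ∈ p.support, d 1 < k → P * (k - d 1) ≤ d 0) :
    ∀ d ∈ p.support, P * k ≤ weight ![1, P, 0] d := fun d hd =>
  weight_one_c_zero P d ▸ (imp_mul_sub_le_iff ..).mp (hbound d hd)

theorem isWeightedLowest_mono3 {R : Type*} [CommSemiring R] {P k : ℕ} (hP : 2 ≤ P)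
    {p : MvPolynomial (Fin 3) R} (hhom : ∀ d ∈ p.support, d 1 + d 2 = 2 * k)
    (hbound : ∀ d ∈ p.support, d 1 < k → P * (k - d 1) ≤ d 0) :
    IsWeightedLowest ![1, 1, 0] (mono3 0 k k) p := by
  intro d hd hne
  have hk := hhom d hd
  suffices k < d 0 + d 1 by simpa [weight_one_c_zero]
  rcases lt_or_ge (d 1) k with hlt | hge
  · -- `P ≥ 2` gives `d 0 ≥ 2 (k - d 1) > k - d 1`
    have := Nat.mul_le_mul_right (k - d 1) hP
    have := hbound d hd hlt
    omega
  · by_contra! hle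
    refine hne (Finsupp.ext fun i => ?_)
    fin_cases i <;> simp <;> omega

/-- For `P ≥ 2`, let `f, g ∈ ℂ[u,s,t]` be homogeneous of degrees `8` and `12` in
`(s,t)`, with every monomial of `f` (resp. `g`) of `s`-degree `σ < 4` (resp. `σ < 6`)
having `u`-degree `μ ≥ P(4-σ)` (resp. `μ ≥ P(6-σ)`). Let `A`, `B` be the coefficients
of `u⁰s⁴t⁴` in `f` and of `u⁰s⁶t⁶` in `g`, and `Δ = 4f³ + 27g²`. Then:
(i) every monomial of `Δ` with `σ < 12` has `μ ≥ P(12-σ)`;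
(ii) the coefficient of `u⁰s¹²t¹²` in `Δ` is `4A³ + 27B²`;
(iii) if `Δ ≠ 0`, then `min(μ+σ) = 12` when `4A³+27B² ≠ 0`, while `min(μ+σ) ≥ 13`
when `4A³+27B² = 0`. -/
theorem stmt_5 (P : ℕ) (hP : 2 ≤ P)
    (f g : MvPolynomial (Fin 3) ℂ)
    (hfhom : ∀ d ∈ f.support, d 1 + d 2 = 8)
    (hghom : ∀ d ∈ g.support, d 1 + d 2 = 12)
    (hf : ∀ d ∈ f.support, d 1 < 4 → P * (4 - d 1) ≤ d 0)
    (hg : ∀ d ∈ g.support, d 1 < 6 → P * (6 - d 1) ≤ d 0)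
    (A B : ℂ)
    (hA : A = MvPolynomial.coeff (mono3 0 4 4) f)
    (hB : B = MvPolynomial.coeff (mono3 0 6 6) g)
    (Δ : MvPolynomial (Fin 3) ℂ)
    (hΔ : Δ = 4 * f ^ 3 + 27 * g ^ 2) :
    (∀ d ∈ Δ.support, d 1 < 12 → P * (12 - d 1) ≤ d 0) ∧
    MvPolynomial.coeff (mono3 0 12 12) Δ = 4 * A ^ 3 + 27 * B ^ 2 ∧
    (Δ ≠ 0 →
      (4 * A ^ 3 + 27 * B ^ 2 ≠ 0 →
        (∀ d ∈ Δ.support, 12 ≤ d 0 + d 1) ∧ ∃ d ∈ Δ.support, d 0 + d 1 = 12) ∧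
      (4 * A ^ 3 + 27 * B ^ 2 = 0 →
        ∀ d ∈ Δ.support, 13 ≤ d 0 + d 1)) := by
  rw [← map_ofNat C 4, ← map_ofNat C 27] at hΔ
  have hsupp : Δ.support ⊆ (f ^ 3).support ∪ (g ^ 2).support :=
    hΔ ▸ support_C_mul_add_C_mul_subset _ _ _ _
  have hweight : ∀ d ∈ Δ.support, P * 12 ≤ weight ![1, P, 0] d := by
    intro d hd
    rcases Finset.mem_union.mp (hsupp hd) with h | h
    · linarith [le_weight_of_mem_support_pow _ (mul_le_weight_of_forall_lt_imp hf) 3 d h]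
    · linarith [le_weight_of_mem_support_pow _ (mul_le_weight_of_forall_lt_imp hg) 2 d h]
  have hf_lowest := isWeightedLowest_mono3 hP hfhom hf
  have hg_lowest := isWeightedLowest_mono3 hP hghom hg
  have h12 : mono3 0 12 12 = 3 • mono3 0 4 4 ∧ mono3 0 12 12 = 2 • mono3 0 6 6 := by
    simp [nsmul_mono3]
  have hlowest : IsWeightedLowest ![1, 1, 0] (mono3 0 12 12) Δ := by
    refine IsWeightedLowest.of_support_subset hsupp ?_ ?_
    · exact h12.1 ▸ hf_lowest.pow 3
    · exact h12.2 ▸ hg_lowest.pow 2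
  have hcoeff : coeff (mono3 0 12 12) Δ = 4 * A ^ 3 + 27 * B ^ 2 := by
    rw [hΔ, coeff_add, coeff_C_mul, coeff_C_mul]
    nth_rw 1 [h12.1]
    rw [h12.2, hf_lowest.coeff_pow, hg_lowest.coeff_pow, hA, hB]
  refine ⟨fun d hd => (imp_mul_sub_le_iff ..).mpr (weight_one_c_zero P d ▸ hweight d hd), hcoeff,
    fun _ => ⟨fun hne => ⟨fun d hd => ?_, ?_⟩, fun hzero d hd => ?_⟩⟩
  · simpa [weight_one_c_zero] using hlowest.weight_le hd
  · exact ⟨mono3 0 12 12, mem_support_iff.mpr (hcoeff ▸ hne), rfl⟩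
  · have hd' : d ≠ mono3 0 12 12 := by
      rintro rfl
      exact mem_support_iff.mp hd (hcoeff.trans hzero)
    simpa [weight_one_c_zero, Nat.lt_iff_add_one_le] using hlowest d hd hd'
end

section
/- Fix integers P ≥ 2 and N ≥ 1, let φ_P : ℂ[u,s,t] → ℂ[e₀,…,e_P,s,t] be the ℂ-algebra homomorphism with u ↦ e₀e₁⋯e_P, s ↦ s·∏_{q=0}^{P} e_q^q, t ↦ t, and let E_N := ∏_{q=0}^{P} e_q^{N·q}. Let D ∈ ℂ[u,s,t] be such that every monomial u^μ s^σ t^τ of D with σ < N satisfies μ ≥ P·(N−σ), and suppose every monomial of D satisfies μ + σ ≥ N + 1. Then E_N divides φ_P(D), and for every p with 1 ≤ p ≤ P−1 the coordinate e_p divides φ_P(D)/E_N. -/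
open MvPolynomial Finset

lemma phi_monomial (P : ℕ) (d : Fin 3 →₀ ℕ) (c : ℂ) :
    phi P (MvPolynomial.monomial d c) =
      MvPolynomial.C c *
        (∏ q : Fin (P + 1), MvPolynomial.X (Sum.inl q) ^ (d 0 + (q : ℕ) * d 1)) *
        MvPolynomial.X (Sum.inr 0) ^ d 1 * MvPolynomial.X (Sum.inr 1) ^ d 2 := by
  rw [phi, aeval_monomial, Finsupp.prod_fintype _ _ (fun i => pow_zero _)]
  rw [Fin.prod_univ_three]
  simp only [Matrix.cons_val_zero, Matrix.cons_val_one, Matrix.head_cons,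
    Matrix.cons_val_two, Matrix.tail_cons]
  rw [mul_pow, ← Finset.prod_pow, ← Finset.prod_pow]
  rw [show (algebraMap ℂ (MvPolynomial (Fin (P+1) ⊕ Fin 2) ℂ)) c = MvPolynomial.C c from rfl]
  simp_rw [pow_add, pow_mul, Finset.prod_mul_distrib]
  ring

lemma arith1 (P N μ σ q : ℕ) (hq : q ≤ P) (h : σ < N → P * (N - σ) ≤ μ) :
    N * q ≤ μ + q * σ := by
  rcases le_or_gt N σ with h1 | h1
  · nlinarith
  · have hm := h h1
    have h3 : q * (N - σ) ≤ P * (N - σ) := Nat.mul_le_mul_right _ hq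
    have hks : (N - σ) + σ = N := by omega
    nlinarith

lemma arith2 (P N μ σ p : ℕ) (hP : 2 ≤ P) (hp1 : 1 ≤ p) (hp2 : p ≤ P - 1)
    (h : σ < N → P * (N - σ) ≤ μ) (h2 : N + 1 ≤ μ + σ) :
    N * p + 1 ≤ μ + p * σ := by
  rcases lt_or_ge σ N with h1 | h1
  · have hm := h h1
    have hpP : p + 1 ≤ P := by omega
    have h3 : (p + 1) * (N - σ) ≤ P * (N - σ) := Nat.mul_le_mul_right _ hpP
    have hks : (N - σ) + σ = N := by omega
    have hk1 : 1 ≤ N - σ := by omega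
    nlinarith
  · rcases eq_or_lt_of_le h1 with he | hl
    · nlinarith
    · have : p * (N + 1) ≤ p * σ := Nat.mul_le_mul_left _ hl
      nlinarith

lemma EN_dvd_prod (P N : ℕ) (f : Fin (P + 1) → ℕ) (h : ∀ q : Fin (P + 1), N * q ≤ f q) :
    EN P N ∣ ∏ q : Fin (P + 1), MvPolynomial.X (σ := Fin (P + 1) ⊕ Fin 2) (R := ℂ) (Sum.inl q) ^ f q :=
  Finset.prod_dvd_prod_of_dvd _ _ fun q _ => pow_dvd_pow _ (h q)

lemma X_mul_EN_dvd_prod (P N : ℕ) (p : Fin (P + 1)) (f : Fin (P + 1) → ℕ)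
    (h : ∀ q : Fin (P + 1), N * q ≤ f q) (hp : N * p + 1 ≤ f p) :
    MvPolynomial.X (Sum.inl p) * EN P N ∣
      ∏ q : Fin (P + 1), MvPolynomial.X (σ := Fin (P + 1) ⊕ Fin 2) (R := ℂ) (Sum.inl q) ^ f q := by
  rw [EN, ← Finset.mul_prod_erase Finset.univ _ (Finset.mem_univ p),
    ← Finset.mul_prod_erase Finset.univ _ (Finset.mem_univ p), ← mul_assoc,
    ← pow_succ']
  exact mul_dvd_mul (pow_dvd_pow _ hp)
    (Finset.prod_dvd_prod_of_dvd _ _ fun q _ => pow_dvd_pow _ (h q))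

lemma EN_ne_zero (P N : ℕ) : EN P N ≠ 0 :=
  Finset.prod_ne_zero_iff.mpr fun q _ => pow_ne_zero _ (MvPolynomial.X_ne_zero _)

/-- For `P ≥ 2`, `N ≥ 1`, if every monomial `u^μ s^σ t^τ` of `D` with `σ < N` has
`μ ≥ P(N-σ)`, and every monomial of `D` has `μ + σ ≥ N + 1`, then `E_N ∣ φ_P(D)`
and every middle coordinate `e_p` (`1 ≤ p ≤ P-1`) divides `φ_P(D)/E_N`. -/
theorem stmt_6 (P N : ℕ) (hP : 2 ≤ P) (hN : 1 ≤ N)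
    (D : MvPolynomial (Fin 3) ℂ)
    (hD : ∀ d ∈ D.support, d 1 < N → P * (N - d 1) ≤ d 0)
    (hD2 : ∀ d ∈ D.support, N + 1 ≤ d 0 + d 1) :
    EN P N ∣ phi P D ∧
    ∀ Q : MvPolynomial (Fin (P + 1) ⊕ Fin 2) ℂ, phi P D = EN P N * Q →
      ∀ p : Fin (P + 1), 1 ≤ (p : ℕ) → (p : ℕ) ≤ P - 1 →
        MvPolynomial.X (Sum.inl p) ∣ Q := by
  have hsum : phi P D = ∑ d ∈ D.support, phi P (MvPolynomial.monomial d (D.coeff d)) := by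
    conv_lhs => rw [D.as_sum]
    rw [map_sum]
  constructor
  · rw [hsum]
    refine Finset.dvd_sum fun d hd => ?_
    rw [phi_monomial]
    refine (((EN_dvd_prod P N _ fun q => ?_).mul_left _).mul_right _).mul_right _
    exact arith1 P N (d 0) (d 1) q q.is_le (hD d hd)
  · intro Q hQ p hp1 hp2
    have hdvd : EN P N * MvPolynomial.X (Sum.inl p) ∣ phi P D := by
      rw [mul_comm, hsum]
      refine Finset.dvd_sum fun d hd => ?_
      rw [phi_monomial]
      refine (((X_mul_EN_dvd_prod P N p _ (fun q => ?_) ?_).mul_left _).mul_right _).mul_right _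
      · exact arith1 P N (d 0) (d 1) q q.is_le (hD d hd)
      · exact arith2 P N (d 0) (d 1) p hP hp1 hp2 (hD d hd) (hD2 d hd)
    rw [hQ] at hdvd
    exact (mul_dvd_mul_iff_left (EN_ne_zero P N)).mp hdvd
end

section
/- Fix integers P ≥ 2, N ≥ 1 and d ≥ N, let φ_P : ℂ[u,s,t] → ℂ[e₀,…,e_P,s,t] be the ℂ-algebra homomorphism with u ↦ e₀e₁⋯e_P, s ↦ s·∏_{q=0}^{P} e_q^q, t ↦ t, and let E_N := ∏_{q=0}^{P} e_q^{N·q}. Let D ∈ ℂ[u,s,t] be homogeneous of degree d in (s,t) such that every monomial u^μ s^σ t^{d−σ} of D with σ < N satisfies μ ≥ P·(N−σ). Then for every p with 1 ≤ p ≤ P−1, setting e_p = 0 in φ_P(D)/E_N yields exactly the single monomial c·s^N·t^{d−N}, where c is the coefficient of u⁰ s^N t^{d−N} in D. -/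
open MvPolynomial

noncomputable def mvec (P μ σ τ : ℕ) : (Fin (P + 1) ⊕ Fin 2) →₀ ℕ :=
  Finsupp.equivFunOnFinite.symm (Sum.elim (fun q : Fin (P + 1) => μ + (q : ℕ) * σ) ![σ, τ])

@[simp] lemma mvec_inl (P μ σ τ : ℕ) (q : Fin (P + 1)) :
    mvec P μ σ τ (Sum.inl q) = μ + (q : ℕ) * σ := rfl

@[simp] lemma mvec_inr0 (P μ σ τ : ℕ) : mvec P μ σ τ (Sum.inr 0) = σ := rfl

@[simp] lemma mvec_inr1 (P μ σ τ : ℕ) : mvec P μ σ τ (Sum.inr 1) = τ := rfl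

noncomputable def enexp (P N : ℕ) : (Fin (P + 1) ⊕ Fin 2) →₀ ℕ :=
  Finsupp.equivFunOnFinite.symm (Sum.elim (fun q : Fin (P + 1) => N * (q : ℕ)) 0)

@[simp] lemma enexp_inl (P N : ℕ) (q : Fin (P + 1)) :
    enexp P N (Sum.inl q) = N * (q : ℕ) := rfl

@[simp] lemma enexp_inr (P N : ℕ) (b : Fin 2) : enexp P N (Sum.inr b) = 0 := rfl

lemma monomial_eq_prod {σ' : Type*} [Fintype σ'] (m : σ' →₀ ℕ) (c : ℂ) :
    (monomial m c : MvPolynomial σ' ℂ) = C c * ∏ i, X i ^ m i := by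
  rw [monomial_eq, Finsupp.prod_pow]

lemma phi_monomial_s7 (P : ℕ) (d : Fin 3 →₀ ℕ) (c : ℂ) :
    phi P (monomial d c) = monomial (mvec P (d 0) (d 1) (d 2)) c := by
  rw [phi, aeval_monomial, Finsupp.prod_pow, Fin.prod_univ_three,
    monomial_eq_prod, Fintype.prod_sum_type, Fin.prod_univ_two]
  simp only [Matrix.cons_val_zero, Matrix.cons_val_one, Matrix.head_cons, mvec_inl,
    mvec_inr0, mvec_inr1]
  simp only [Matrix.cons_val_two, Matrix.tail_cons, Matrix.head_cons, algebraMap_eq,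
    mul_pow, ← Finset.prod_pow, ← pow_mul, pow_add, Finset.prod_mul_distrib]
  ring

lemma fin3_eq_mono3 (d : Fin 3 →₀ ℕ) : d = mono3 (d 0) (d 1) (d 2) := by
  ext i
  fin_cases i <;> rfl

lemma EN_eq (P N : ℕ) : EN P N = monomial (enexp P N) 1 := by
  rw [monomial_eq_prod, Fintype.prod_sum_type, Fin.prod_univ_two]
  simp [EN]

lemma phi_as_sum (P : ℕ) (D : MvPolynomial (Fin 3) ℂ) :
    phi P D = ∑ d ∈ D.support, monomial (mvec P (d 0) (d 1) (d 2)) (coeff d D) := by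
  conv_lhs => rw [D.as_sum]
  rw [map_sum]
  simp only [phi_monomial_s7]

lemma coeff_phi (P : ℕ) (D : MvPolynomial (Fin 3) ℂ) (μ σ τ : ℕ) :
    coeff (mvec P μ σ τ) (phi P D) = coeff (mono3 μ σ τ) D := by
  have key : ∀ d : Fin 3 →₀ ℕ,
      (mvec P (d 0) (d 1) (d 2) = mvec P μ σ τ) ↔ d = mono3 μ σ τ := by
    intro d
    constructor
    · intro h
      have h0 : d 0 = μ := by
        have := DFunLike.congr_fun h (Sum.inl 0)
        simpa using this
      have h1 : d 1 = σ := DFunLike.congr_fun h (Sum.inr 0)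
      have h2 : d 2 = τ := DFunLike.congr_fun h (Sum.inr 1)
      rw [fin3_eq_mono3 d, h0, h1, h2]
    · intro h
      have h0 : d 0 = μ := by rw [h]; rfl
      have h1 : d 1 = σ := by rw [h]; rfl
      have h2 : d 2 = τ := by rw [h]; rfl
      rw [h0, h1, h2]
  rw [phi_as_sum, coeff_sum]
  simp only [coeff_monomial, key]
  rw [Finset.sum_ite_eq' D.support (mono3 μ σ τ) (fun d => coeff d D)]
  split_ifs with h
  · rfl
  · exact (notMem_support_iff.mp h).symm

lemma phi_support (P : ℕ) (D : MvPolynomial (Fin 3) ℂ) (w : (Fin (P + 1) ⊕ Fin 2) →₀ ℕ)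
    (h : coeff w (phi P D) ≠ 0) :
    ∃ d ∈ D.support, w = mvec P (d 0) (d 1) (d 2) := by
  by_contra hc
  push_neg at hc
  apply h
  rw [phi_as_sum, coeff_sum]
  apply Finset.sum_eq_zero
  intro d hd
  rw [coeff_monomial, if_neg]
  intro hh
  exact hc d hd hh.symm

set_option maxHeartbeats 1000000 in
/-- For `P ≥ 2`, `N ≥ 1`, `d ≥ N`, and `D` homogeneous of degree `d` in `(s,t)` with
every monomial of `s`-degree `σ < N` having `u`-degree `μ ≥ P(N-σ)`: for every middle
index `1 ≤ p ≤ P-1`, setting `e_p = 0` in `φ_P(D)/E_N` yields exactly the single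
monomial `c·s^N·t^{d-N}`, where `c` is the coefficient of `u⁰ s^N t^{d-N}` in `D`. -/
theorem stmt_7 (P N dg : ℕ) (hP : 2 ≤ P) (hN : 1 ≤ N) (hdg : N ≤ dg)
    (D : MvPolynomial (Fin 3) ℂ)
    (hDhom : ∀ d ∈ D.support, d 1 + d 2 = dg)
    (hD : ∀ d ∈ D.support, d 1 < N → P * (N - d 1) ≤ d 0) :
    ∀ Q : MvPolynomial (Fin (P + 1) ⊕ Fin 2) ℂ, phi P D = EN P N * Q →
      ∀ p : Fin (P + 1), 1 ≤ (p : ℕ) → (p : ℕ) ≤ P - 1 →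
        MvPolynomial.aeval
            (fun i : Fin (P + 1) ⊕ Fin 2 =>
              if i = Sum.inl p then (0 : MvPolynomial (Fin (P + 1) ⊕ Fin 2) ℂ)
              else MvPolynomial.X i) Q
          = MvPolynomial.C (MvPolynomial.coeff (mono3 0 N (dg - N)) D)
              * MvPolynomial.X (Sum.inr 0) ^ N
              * MvPolynomial.X (Sum.inr 1) ^ (dg - N) := by
  intro Q hQ p hp1 hp2
  -- coefficient relation between Q and D
  have hcoeff : ∀ v, coeff v Q = coeff (enexp P N + v) (phi P D) := by
    intro v
    rw [hQ, EN_eq, coeff_monomial_mul, one_mul]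
  -- evaluation of the specialization on monomials
  have psi_mono : ∀ (v : (Fin (P + 1) ⊕ Fin 2) →₀ ℕ) (c : ℂ),
      MvPolynomial.aeval
          (fun i : Fin (P + 1) ⊕ Fin 2 =>
            if i = Sum.inl p then (0 : MvPolynomial (Fin (P + 1) ⊕ Fin 2) ℂ)
            else MvPolynomial.X i) (monomial v c)
        = if v (Sum.inl p) = 0 then monomial v c else 0 := by
    intro v c
    rw [aeval_monomial, Finsupp.prod_pow]
    split_ifs with h
    · rw [monomial_eq_prod, algebraMap_eq]
      congr 1
      apply Finset.prod_congr rfl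
      intro i _
      by_cases hi : i = Sum.inl p
      · subst hi
        rw [h, if_pos rfl, pow_zero, pow_zero]
      · rw [if_neg hi]
    · rw [Finset.prod_eq_zero (Finset.mem_univ (Sum.inl p)), mul_zero]
      rw [if_pos rfl]
      exact zero_pow h
  -- the surviving exponent vector
  set v0 : (Fin (P + 1) ⊕ Fin 2) →₀ ℕ :=
    Finsupp.equivFunOnFinite.symm (Sum.elim 0 ![N, dg - N]) with hv0def
  have hv0l : ∀ q : Fin (P + 1), v0 (Sum.inl q) = 0 := fun _ => rfl
  have hv0r0 : v0 (Sum.inr 0) = N := rfl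
  have hv0r1 : v0 (Sum.inr 1) = dg - N := rfl
  have hsum : enexp P N + v0 = mvec P 0 N (dg - N) := by
    ext i
    rcases i with q | b
    · simp [hv0l, Nat.mul_comm]
    · fin_cases b <;> simp [hv0r0, hv0r1]
  have hQv0 : coeff v0 Q = coeff (mono3 0 N (dg - N)) D := by
    rw [hcoeff, hsum, coeff_phi]
  conv_lhs => rw [Q.as_sum]
  rw [map_sum]
  simp only [psi_mono]
  rw [Finset.sum_eq_single v0]
  · rw [if_pos (hv0l p), hQv0, monomial_eq_prod, Fintype.prod_sum_type, Fin.prod_univ_two]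
    simp only [hv0l, hv0r0, hv0r1, pow_zero, Finset.prod_const_one, one_mul, mul_assoc]
  · intro v hv hne
    by_cases hvp : v (Sum.inl p) = 0
    · exfalso
      have hc0 : coeff v Q ≠ 0 := mem_support_iff.mp hv
      rw [hcoeff] at hc0
      obtain ⟨d, hd, hw⟩ := phi_support P D _ hc0
      have key : ∀ q : Fin (P + 1), N * (q : ℕ) + v (Sum.inl q) = d 0 + (q : ℕ) * d 1 := by
        intro q
        have := DFunLike.congr_fun hw (Sum.inl q)
        simpa [Finsupp.add_apply] using this
      have kr0 : v (Sum.inr 0) = d 1 := by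
        have := DFunLike.congr_fun hw (Sum.inr 0)
        simpa [Finsupp.add_apply] using this
      have kr1 : v (Sum.inr 1) = d 2 := by
        have := DFunLike.congr_fun hw (Sum.inr 1)
        simpa [Finsupp.add_apply] using this
      have kp : N * (p : ℕ) = d 0 + (p : ℕ) * d 1 := by
        have := key p
        rwa [hvp, add_zero] at this
      have hmc : N * (p : ℕ) = (p : ℕ) * N := Nat.mul_comm _ _
      -- d 1 ≤ N
      have hσle : d 1 ≤ N := by
        by_contra hgt
        push_neg at hgt
        nlinarith [kp, hmc, hp1, hgt]
      rcases Nat.lt_or_ge (d 1) N with hlt | hge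
      · -- impossible: u-order too small
        have hPd : P * (N - d 1) ≤ d 0 := hD d hd hlt
        have hd0 : d 0 + (p : ℕ) * d 1 = (p : ℕ) * (N - d 1) + (p : ℕ) * d 1 := by
          rw [← Nat.mul_add, Nat.sub_add_cancel (le_of_lt hlt)]
          omega
        have hd0' : d 0 = (p : ℕ) * (N - d 1) := by omega
        have hplt : (p : ℕ) < P := by omega
        have hk1 : 1 ≤ N - d 1 := by omega
        nlinarith [hPd, hd0', hplt, hk1]
      · -- d 1 = N, hence d 0 = 0 and v = v0
        have hσ : d 1 = N := le_antisymm hσle hge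
        have hd0 : d 0 = 0 := by
          rw [hσ] at kp
          omega
        have hτ : d 2 = dg - N := by
          have := hDhom d hd
          omega
        apply hne
        ext i
        rcases i with q | b
        · have := key q
          rw [hd0, hσ] at this
          have h2 : N * (q : ℕ) = (q : ℕ) * N := Nat.mul_comm _ _
          rw [hv0l q]
          omega
        · fin_cases b
          · simp only [Fin.zero_eta, Fin.isValue, kr0, hσ, hv0r0]
          · simp only [Fin.mk_one, Fin.isValue, kr1, hτ, hv0r1]
    · rw [if_neg hvp]
  · intro hns
    rw [if_pos (hv0l p), notMem_support_iff.mp hns, monomial_zero]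
end

section
/- Let (μ_m, σ_m), for m in a finite nonempty index set M, be pairs of natural numbers, let N be a natural number, and for integers q ≥ 0 define ε_q(m) := μ_m + q·(σ_m − N) ∈ ℤ and n_q := min_{m∈M} ε_q(m). Fix an integer p ≥ 1 and a positive integer k, and define ε̄_{q̄}(m) := k·μ_m + q̄·(σ_m − N) and n̄_{q̄} := min_{m∈M} ε̄_{q̄}(m). Assume there exist m′, m″ ∈ M with ε_{p−1}(m′) = n_{p−1} and ε_p(m′) = n_p, and with ε_p(m″) = n_p and ε_{p+1}(m″) = n_{p+1}. Then: (i) n̄_{kp} = k·n_p, n̄_{kp+1} = (k−1)·n_p + n_{p+1}, and n̄_{kp−1} = n_{p−1} + (k−1)·n_p; (ii) for every m ∈ M, ε̄_{kp}(m) = n̄_{kp} if and only if ε_p(m) = n_p; (iii) every m with ε_p(m) = n_p satisfies ε̄_{kp+1}(m) − n̄_{kp+1} = ε_{p+1}(m) − n_{p+1} and ε̄_{kp−1}(m) − n̄_{kp−1} = ε_{p−1}(m) − n_{p−1}. -/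
/-- Let `(μ_m, σ_m)` (`m` in a finite nonempty index set `M`) be pairs of naturals,
`N : ℕ`, and define `ε_q(m) = μ_m + q(σ_m - N)` with minimum `n_q`, and the
base-changed analogues `ε̄_q̄(m) = k·μ_m + q̄(σ_m - N)` with minimum `n̄_q̄`. Fix
`p ≥ 1`, `k ≥ 1`, and assume some `m'` attains the minima at both `p-1` and `p`
and some `m''` attains them at both `p` and `p+1`. Then:
(i) `n̄_{kp} = k·n_p`, `n̄_{kp+1} = (k-1)n_p + n_{p+1}`, `n̄_{kp-1} = n_{p-1} + (k-1)n_p`;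
(ii) `ε̄_{kp}(m) = n̄_{kp}` iff `ε_p(m) = n_p`;
(iii) every `m` with `ε_p(m) = n_p` has
`ε̄_{kp+1}(m) - n̄_{kp+1} = ε_{p+1}(m) - n_{p+1}` and
`ε̄_{kp-1}(m) - n̄_{kp-1} = ε_{p-1}(m) - n_{p-1}`. -/
theorem stmt_9 {M : Type*} [Fintype M] [Nonempty M]
    (μ σ : M → ℕ) (N : ℕ) (p k : ℕ) (hp : 1 ≤ p) (hk : 1 ≤ k)
    (ε εb : ℕ → M → ℤ) (n nb : ℕ → ℤ)
    (hε : ∀ q m, ε q m = (μ m : ℤ) + (q : ℤ) * ((σ m : ℤ) - (N : ℤ)))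
    (hεb : ∀ q m, εb q m = (k : ℤ) * (μ m : ℤ) + (q : ℤ) * ((σ m : ℤ) - (N : ℤ)))
    (hn : ∀ q, n q = Finset.univ.inf' Finset.univ_nonempty (ε q))
    (hnb : ∀ q, nb q = Finset.univ.inf' Finset.univ_nonempty (εb q))
    (hm' : ∃ m', ε (p - 1) m' = n (p - 1) ∧ ε p m' = n p)
    (hm'' : ∃ m'', ε p m'' = n p ∧ ε (p + 1) m'' = n (p + 1)) :
    (nb (k * p) = (k : ℤ) * n p ∧
      nb (k * p + 1) = ((k : ℤ) - 1) * n p + n (p + 1) ∧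
      nb (k * p - 1) = n (p - 1) + ((k : ℤ) - 1) * n p) ∧
    (∀ m, εb (k * p) m = nb (k * p) ↔ ε p m = n p) ∧
    (∀ m, ε p m = n p →
      εb (k * p + 1) m - nb (k * p + 1) = ε (p + 1) m - n (p + 1) ∧
      εb (k * p - 1) m - nb (k * p - 1) = ε (p - 1) m - n (p - 1)) := by

  obtain ⟨m', h1', h2'⟩ := hm'
  obtain ⟨m'', h1'', h2''⟩ := hm''
  have hk0 : (0:ℤ) < (k:ℤ) := by exact_mod_cast hk
  have hkp1 : 1 ≤ k * p := Nat.one_le_iff_ne_zero.mpr (by positivity)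
  have hnle : ∀ q m, n q ≤ ε q m := fun q m => by
    rw [hn]; exact Finset.inf'_le _ (Finset.mem_univ m)
  have hnbex : ∀ q, ∃ m, nb q = εb q m := fun q => by
    obtain ⟨b, _, hb⟩ := Finset.exists_mem_eq_inf' (Finset.univ_nonempty) (εb q)
    exact ⟨b, (hnb q).trans hb⟩
  have hnble : ∀ q m, nb q ≤ εb q m := fun q m => by
    rw [hnb]; exact Finset.inf'_le _ (Finset.mem_univ m)
  have e1 : ∀ m, εb (k * p) m = (k:ℤ) * ε p m := fun m => by
    rw [hεb, hε]; push_cast; ring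
  have e2 : ∀ m, εb (k * p + 1) m = ((k:ℤ) - 1) * ε p m + ε (p + 1) m := fun m => by
    rw [hεb, hε, hε]; push_cast; ring
  have e3 : ∀ m, εb (k * p - 1) m = ((k:ℤ) - 1) * ε p m + ε (p - 1) m := fun m => by
    rw [hεb, hε, hε, Nat.cast_sub hkp1, Nat.cast_sub hp]; push_cast; ring
  have hA : nb (k * p) = (k:ℤ) * n p := by
    refine le_antisymm ?_ ?_
    · calc nb (k * p) ≤ εb (k * p) m'' := hnble _ _
        _ = (k:ℤ) * n p := by rw [e1, h1'']
    · obtain ⟨m1, hm1⟩ := hnbex (k * p)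
      rw [hm1, e1]
      exact mul_le_mul_of_nonneg_left (hnle p m1) hk0.le
  have hB : nb (k * p + 1) = ((k:ℤ) - 1) * n p + n (p + 1) := by
    refine le_antisymm ?_ ?_
    · calc nb (k * p + 1) ≤ εb (k * p + 1) m'' := hnble _ _
        _ = _ := by rw [e2, h1'', h2'']
    · obtain ⟨m1, hm1⟩ := hnbex (k * p + 1)
      rw [hm1, e2]
      have := hnle p m1
      have := hnle (p + 1) m1
      have hk1 : (0:ℤ) ≤ (k:ℤ) - 1 := by omega
      nlinarith
  have hC : nb (k * p - 1) = n (p - 1) + ((k:ℤ) - 1) * n p := by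
    refine le_antisymm ?_ ?_
    · calc nb (k * p - 1) ≤ εb (k * p - 1) m' := hnble _ _
        _ = _ := by rw [e3, h1', h2']; ring
    · obtain ⟨m1, hm1⟩ := hnbex (k * p - 1)
      rw [hm1, e3]
      have := hnle p m1
      have := hnle (p - 1) m1
      have hk1 : (0:ℤ) ≤ (k:ℤ) - 1 := by omega
      nlinarith
  refine ⟨⟨hA, hB, hC⟩, ?_, ?_⟩
  · intro m
    rw [e1, hA]
    exact ⟨fun h => mul_left_cancel₀ hk0.ne' h, fun h => by rw [h]⟩
  · intro m hm
    constructor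
    · rw [e2, hB, hm]; ring
    · rw [e3, hC, hm]; ring
end

section
/- Let (a_m, b_m), for m in a finite nonempty index set M, be pairs of natural numbers, and for a positive integer k define 𝔐_k(r) = min_{m∈M} ((k−r)·a_m + r·b_m). Say that property P(k) holds if for every integer r with 0 ≤ r ≤ k−1 there exists m ∈ M such that 𝔐_k(r) = (k−r)·a_m + r·b_m and 𝔐_k(r+1) = (k−r−1)·a_m + (r+1)·b_m. Then there exists a positive integer k₀ such that for every positive integer k, P(k) holds if and only if k₀ divides k. -/
/-!
Rescaling `r ↦ r / k` turns `𝔐_k` into `k` times the lower envelope `f` of the lines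
`t ↦ (1 - t) a_m + t b_m` (slope `s_m = b_m - a_m`) on `[0, 1]`, and `P(k)` into: on each step
`[r/k, (r+1)/k]` a single line is lowest at both ends. This holds iff every breakpoint of `f` in
`(0, 1)` lies in `(1/k)ℤ`: a breakpoint strictly inside a step forbids a common lowest line, and
conversely, following the lowest line of least slope from the left end of a step, one first meets
another line at a breakpoint. A breakpoint `t` solves `t (s_i - s_j) = a_j - a_i` with
`0 ≠ s_i - s_j ∈ ℤ`, so the integers `k` with `k t ∈ ℤ` for all breakpoints form a nonzero ideal
of `ℤ`, generated by some `k₀ > 0`.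
-/

open Finset

def integralizingIdeal (p : ℝ → Prop) : Ideal ℤ where
  carrier := {k | ∀ t, p t → ∃ z : ℤ, k * t = z}
  add_mem' {k l} hk hl t ht := by
    obtain ⟨z, hz⟩ := hk t ht
    obtain ⟨w, hw⟩ := hl t ht
    exact ⟨z + w, by push_cast; rw [add_mul, hz, hw]⟩
  zero_mem' t _ := ⟨0, by simp⟩
  smul_mem' c k hk t ht := by
    obtain ⟨z, hz⟩ := hk t ht
    exact ⟨c * z, by rw [smul_eq_mul]; push_cast; rw [mul_assoc, hz]⟩

theorem exists_pos_forall_mul_eq_int_iff_dvd {p : ℝ → Prop} {K : ℤ} (hK : K ≠ 0)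
    (hKp : ∀ t, p t → ∃ z : ℤ, K * t = z) :
    ∃ k₀ : ℕ, 0 < k₀ ∧ ∀ k : ℤ, (∀ t, p t → ∃ z : ℤ, k * t = z) ↔ (k₀ : ℤ) ∣ k := by
  set I := integralizingIdeal p
  refine ⟨(Submodule.IsPrincipal.generator I).natAbs, Int.natAbs_pos.2 ?_, fun k => ?_⟩
  · rw [Ne, ← Submodule.IsPrincipal.eq_bot_iff_generator_eq_zero]
    intro hI
    exact hK ((Submodule.mem_bot ℤ).1 (hI ▸ hKp : K ∈ (⊥ : Ideal ℤ)))
  · rw [Int.natAbs_dvd, ← Submodule.IsPrincipal.mem_iff_generator_dvd]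
    rfl

namespace LowerEnvelope

variable {M : Type*} (a b : M → ℝ)

def line (m : M) (t : ℝ) : ℝ := (1 - t) * a m + t * b m

def slope (m : M) : ℝ := b m - a m

def IsLowest (t : ℝ) (m : M) : Prop := ∀ j, line a b m t ≤ line a b j t

def IsBreakpoint (t : ℝ) : Prop :=
  t ∈ Set.Ioo 0 1 ∧ ∃ i j, IsLowest a b t i ∧ IsLowest a b t j ∧ slope a b i ≠ slope a b j

/-- The property `P(k)` after the rescaling `r ↦ r / k`. -/
def IsAdaptedSubdivision (k : ℕ) : Prop :=
  ∀ r : ℕ, r + 1 ≤ k → ∃ m, IsLowest a b (r / k) m ∧ IsLowest a b ((r + 1) / k) m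

/-- The abscissa where line `j` meets line `m`. -/
noncomputable def crossing (m j : M) : ℝ := (a j - a m) / (slope a b m - slope a b j)

lemma line_sub_line (i j : M) (s t : ℝ) :
    line a b i t - line a b j t
      = line a b i s - line a b j s + (t - s) * (slope a b i - slope a b j) := by
  unfold line slope; ring

variable {a b}

lemma line_sub_line_eq_mul_crossing {m j : M} (h : slope a b j ≠ slope a b m) (t : ℝ) :
    line a b j t - line a b m t = (slope a b m - slope a b j) * (crossing a b m j - t) := by
  rw [crossing, mul_sub, mul_div_cancel₀ _ (sub_ne_zero.2 h.symm)]
  unfold line slope; ring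

lemma IsLowest.of_le_crossing {m : M} {u t : ℝ} (hu : IsLowest a b u m) (hut : u ≤ t)
    (hcross : ∀ j, slope a b j < slope a b m → t ≤ crossing a b m j) : IsLowest a b t m := by
  intro j
  rw [← sub_nonneg]
  rcases lt_or_ge (slope a b j) (slope a b m) with h | h
  · rw [line_sub_line_eq_mul_crossing h.ne]
    exact mul_nonneg (sub_nonneg.2 h.le) (sub_nonneg.2 (hcross j h))
  · have := hu j
    rw [line_sub_line a b j m u t]
    nlinarith [mul_nonneg (sub_nonneg.2 hut) (sub_nonneg.2 h)]

lemma slope_eq_of_isLowest {m i : M} {u t v : ℝ} (hu : IsLowest a b u m)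
    (hv : IsLowest a b v m) (ht : t ∈ Set.Ioo u v) (hi : IsLowest a b t i) :
    slope a b i = slope a b m := by
  have := hu i
  have := hv i
  have := hi m
  have := line_sub_line a b i m t u
  have := line_sub_line a b i m t v
  rcases lt_trichotomy (slope a b i) (slope a b m) with h | h | h
  · nlinarith [mul_pos (sub_pos.2 ht.2) (sub_pos.2 h)]
  · exact h
  · nlinarith [mul_pos (sub_pos.2 ht.1) (sub_pos.2 h)]

lemma not_isBreakpoint_of_isLowest {m : M} {u t v : ℝ} (hu : IsLowest a b u m)
    (hv : IsLowest a b v m) (ht : t ∈ Set.Ioo u v) : ¬ IsBreakpoint a b t := by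
  rintro ⟨-, i, j, hi, hj, hij⟩
  exact hij ((slope_eq_of_isLowest hu hv ht hi).trans (slope_eq_of_isLowest hu hv ht hj).symm)

theorem exists_ne_zero_mul_eq_int_of_isBreakpoint [Fintype M] (a b : M → ℤ) :
    ∃ K : ℤ, K ≠ 0 ∧ ∀ t, IsBreakpoint (fun m => (a m : ℝ)) (fun m => (b m : ℝ)) t →
      ∃ z : ℤ, K * t = z := by
  classical
  let s : M × M → ℤ := fun p => (b p.1 - a p.1) - (b p.2 - a p.2)
  let pairs := univ.filter (fun p => s p ≠ 0)
  refine ⟨∏ p ∈ pairs, s p, prod_ne_zero_iff.2 fun p hp => (mem_filter.1 hp).2, ?_⟩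
  rintro t ⟨-, i, j, hi, hj, hij⟩
  have hmem : (i, j) ∈ pairs := mem_filter.2 ⟨mem_univ _, fun h => hij (by
    simp only [slope]; exact_mod_cast sub_eq_zero.1 h)⟩
  obtain ⟨c, hc⟩ := dvd_prod_of_mem s hmem
  refine ⟨c * (a j - a i), ?_⟩
  have hij' : line _ _ i t = line _ _ j t := le_antisymm (hi j) (hj i)
  simp only [line] at hij'
  rw [hc]
  simp only [s]
  push_cast
  linear_combination (c : ℝ) * hij'

variable [Fintype M] [Nonempty M]

lemma exists_isLowest_forall_slope_le (u : ℝ) :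
    ∃ m, IsLowest a b u m ∧ ∀ j, IsLowest a b u j → slope a b m ≤ slope a b j := by
  classical
  obtain ⟨m₀, -, hm₀⟩ := univ.exists_min_image (line a b · u) univ_nonempty
  obtain ⟨m, hm, hmin⟩ := (univ.filter (IsLowest a b u)).exists_min_image (slope a b)
    ⟨m₀, mem_filter.2 ⟨mem_univ _, fun j => hm₀ j (mem_univ j)⟩⟩
  exact ⟨m, (mem_filter.1 hm).2, fun j hj => hmin j (mem_filter.2 ⟨mem_univ _, hj⟩)⟩

lemma exists_isLowest_or_isBreakpoint {u v : ℝ} (huv : u < v) (hu : 0 ≤ u) (hv : v ≤ 1) :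
    (∃ m, IsLowest a b u m ∧ IsLowest a b v m) ∨ ∃ w ∈ Set.Ioo u v, IsBreakpoint a b w := by
  classical
  obtain ⟨m, hm, hmin⟩ := exists_isLowest_forall_slope_le (a := a) (b := b) u
  have isLowest_at_crossing : ∀ j, slope a b j ≠ slope a b m →
      IsLowest a b (crossing a b m j) m → IsLowest a b (crossing a b m j) j := by
    intro j hj hmc i
    have := line_sub_line_eq_mul_crossing hj (crossing a b m j)
    rw [sub_self, mul_zero, sub_eq_zero] at this
    rw [this]
    exact hmc i
  -- lines of smaller slope than `m` lie strictly above it at `u`, by the choice of `m`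
  have lt_crossing : ∀ j, slope a b j < slope a b m → u < crossing a b m j := by
    intro j hj
    have hmj := hm j
    rw [← sub_nonneg, line_sub_line_eq_mul_crossing hj.ne] at hmj
    refine (sub_nonneg.1 (nonneg_of_mul_nonneg_right hmj (sub_pos.2 hj))).lt_of_ne fun hc => ?_
    have hj_low := isLowest_at_crossing j hj.ne (hc ▸ hm)
    rw [← hc] at hj_low
    exact (hmin j hj_low).not_gt hj
  by_cases hfar : ∀ j, slope a b j < slope a b m → v ≤ crossing a b m j
  · exact Or.inl ⟨m, hm, hm.of_le_crossing huv.le hfar⟩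
  push Not at hfar
  obtain ⟨j, hj, hjv⟩ := hfar
  obtain ⟨j₀, hj₀, hj₀min⟩ := (univ.filter (slope a b · < slope a b m)).exists_min_image
    (crossing a b m) ⟨j, mem_filter.2 ⟨mem_univ _, hj⟩⟩
  replace hj₀ := (mem_filter.1 hj₀).2
  have hwu := lt_crossing j₀ hj₀
  have hwv := (hj₀min j (mem_filter.2 ⟨mem_univ _, hj⟩)).trans_lt hjv
  have hmw : IsLowest a b (crossing a b m j₀) m :=
    hm.of_le_crossing hwu.le fun i hi => hj₀min i (mem_filter.2 ⟨mem_univ _, hi⟩)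
  exact Or.inr ⟨_, ⟨hwu, hwv⟩, ⟨hu.trans_lt hwu, hwv.trans_le hv⟩, j₀, m,
    isLowest_at_crossing j₀ hj₀.ne hmw, hmw, hj₀.ne⟩

theorem isAdaptedSubdivision_iff {k : ℕ} (hk : 0 < k) :
    IsAdaptedSubdivision a b k ↔ ∀ t, IsBreakpoint a b t → ∃ z : ℤ, k * t = z := by
  have hk' : (0 : ℝ) < k := Nat.cast_pos.2 hk
  constructor
  · intro hP t ht
    set r := ⌊k * t⌋₊
    by_cases hr : (r : ℝ) = k * t
    · exact ⟨r, by rw [← hr]; norm_cast⟩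
    have hrt : (r : ℝ) < k * t := (Nat.floor_le (by nlinarith [ht.1.1])).lt_of_ne hr
    have htr : k * t < r + 1 := Nat.lt_floor_add_one _
    have hrk : r + 1 ≤ k := by
      have : (r : ℝ) < k := hrt.trans (by nlinarith [ht.1.2])
      exact_mod_cast this
    obtain ⟨m, hu, hv⟩ := hP r hrk
    exact absurd ht (not_isBreakpoint_of_isLowest hu hv
      ⟨(div_lt_iff₀' hk').2 hrt, (lt_div_iff₀' hk').2 htr⟩)
  · intro hQ r hr
    have hr' : (r : ℝ) + 1 ≤ k := by exact_mod_cast hr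
    rcases exists_isLowest_or_isBreakpoint (a := a) (b := b)
        (div_lt_div_of_pos_right (lt_add_one (r : ℝ)) hk') (by positivity)
        (div_le_one_of_le₀ hr' hk'.le) with h | ⟨w, ⟨huw, hwv⟩, hw⟩
    · exact h
    obtain ⟨z, hz⟩ := hQ w hw
    rw [div_lt_iff₀' hk', hz] at huw
    rw [lt_div_iff₀' hk', hz] at hwv
    have : (r : ℤ) < z := by exact_mod_cast huw
    have : z < r + 1 := by exact_mod_cast hwv
    omega

/-- `𝔐_k(x)` is `k f(x / k)`, so the lines attaining it are those lowest at `x / k`. -/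
theorem inf'_eq_iff_isLowest {k : ℕ} (hk : 0 < k) (x : ℝ) (m : M) :
    univ.inf' univ_nonempty (fun m' => ((k : ℝ) - x) * a m' + x * b m')
        = ((k : ℝ) - x) * a m + x * b m ↔ IsLowest a b (x / k) m := by
  have hk' : (0 : ℝ) < k := Nat.cast_pos.2 hk
  have hscale : ∀ j, ((k : ℝ) - x) * a j + x * b j = k * line a b j (x / k) := fun j => by
    unfold line; field_simp
  simp only [hscale]
  refine ⟨fun h j => le_of_mul_le_mul_left (h ▸ inf'_le _ (mem_univ j)) hk', fun h => ?_⟩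
  exact le_antisymm (inf'_le _ (mem_univ m))
    (le_inf' _ _ fun j _ => mul_le_mul_of_nonneg_left (h j) hk'.le)

end LowerEnvelope

open LowerEnvelope in
/-- Let `(a_m, b_m)` (`m` in a finite nonempty index set) be pairs of naturals and
for `k ≥ 1` let `𝔐_k(r) = min_m ((k-r)a_m + r b_m)`. Say `P(k)` holds if for every
integer `0 ≤ r ≤ k-1` some `m` attains the minimum at both `r` and `r+1`. Then there
is a positive integer `k₀` such that for every `k ≥ 1`, `P(k)` holds iff `k₀ ∣ k`. -/
theorem stmt_14 {M : Type*} [Fintype M] [Nonempty M] (a b : M → ℕ) :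
    ∃ k₀ : ℕ, 0 < k₀ ∧ ∀ k : ℕ, 0 < k →
      ((∀ r : ℕ, r + 1 ≤ k → ∃ m : M,
          Finset.univ.inf' Finset.univ_nonempty
              (fun m' => ((k : ℝ) - (r : ℝ)) * (a m' : ℝ) + (r : ℝ) * (b m' : ℝ))
            = ((k : ℝ) - (r : ℝ)) * (a m : ℝ) + (r : ℝ) * (b m : ℝ) ∧
          Finset.univ.inf' Finset.univ_nonempty
              (fun m' => ((k : ℝ) - ((r : ℝ) + 1)) * (a m' : ℝ) + ((r : ℝ) + 1) * (b m' : ℝ))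
            = ((k : ℝ) - ((r : ℝ) + 1)) * (a m : ℝ) + ((r : ℝ) + 1) * (b m : ℝ))
        ↔ k₀ ∣ k) := by
  obtain ⟨K, hK, hKB⟩ := exists_ne_zero_mul_eq_int_of_isBreakpoint
    (fun m => (a m : ℤ)) (fun m => (b m : ℤ))
  simp only [Int.cast_natCast] at hKB
  obtain ⟨k₀, hk₀, hdvd⟩ := exists_pos_forall_mul_eq_int_iff_dvd hK hKB
  refine ⟨k₀, hk₀, fun k hk => ?_⟩
  rw [← Int.natCast_dvd_natCast, ← hdvd, Int.cast_natCast, ← isAdaptedSubdivision_iff hk]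
  exact forall_congr' fun r => imp_congr_right fun _ => exists_congr fun m =>
    and_congr (inf'_eq_iff_isLowest hk _ m) (inf'_eq_iff_isLowest hk _ m)
end

section
/- For each p ∈ {0,…,P−1} let (a_m^{(p)}, b_m^{(p)}), for m in a finite nonempty index set M_p, be pairs of natural numbers, and for a positive integer k define 𝔐_k^{(p)}(r) = min_{m∈M_p} ((k−r)·a_m^{(p)} + r·b_m^{(p)}). Say that property P_p(k) holds if for every integer r with 0 ≤ r ≤ k−1 there exists m ∈ M_p with 𝔐_k^{(p)}(r) = (k−r)·a_m^{(p)} + r·b_m^{(p)} and 𝔐_k^{(p)}(r+1) = (k−r−1)·a_m^{(p)} + (r+1)·b_m^{(p)}. Then there exists a positive integer k₀ such that for every positive integer k, P_p(k) holds for all p ∈ {0,…,P−1} if and only if k₀ divides k. -/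
namespace Stmt15Aux

/-- affine interpolation: nonneg at endpoints → nonneg between. -/
lemma interp {c d x y t : ℝ} (hx : 0 ≤ c + d * x) (hy : 0 ≤ c + d * y)
    (hxt : x ≤ t) (hty : t ≤ y) : 0 ≤ c + d * t := by
  rcases le_or_gt 0 d with hd | hd
  · have : d * x ≤ d * t := mul_le_mul_of_nonneg_left hxt hd
    linarith
  · have : d * y ≤ d * t := mul_le_mul_of_nonpos_left hty hd.le
    linarith

/-- affine pinch: nonneg at endpoints, zero strictly inside → zero at endpoints. -/
lemma pinch {c d x y t : ℝ} (hx : 0 ≤ c + d * x) (hy : 0 ≤ c + d * y)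
    (hxt : x < t) (hty : t < y) (ht : c + d * t = 0) :
    c + d * x = 0 ∧ c + d * y = 0 := by
  have hd : d = 0 := by
    rcases lt_trichotomy d 0 with h | h | h
    · nlinarith
    · exact h
    · nlinarith
  constructor <;> nlinarith

/-- sign-change crossing is strictly between. -/
lemma between {c d x y t : ℝ} (hx : 0 < c + d * x) (hy : c + d * y < 0)
    (hxy : x < y) (ht : c + d * t = 0) : x < t ∧ t < y := by
  have hd : d < 0 := by nlinarith
  constructor <;> nlinarith

/-- zero at two distinct points → slope zero. -/
lemma slope_zero {c d x y : ℝ} (hx : c + d * x = 0) (hy : c + d * y = 0)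
    (hxy : x ≠ y) : d = 0 := by
  have : d * (x - y) = 0 := by linarith
  rcases mul_eq_zero.1 this with h | h
  · exact h
  · exact absurd (sub_eq_zero.1 h) hxy

lemma den_dvd_iff {q : ℚ} {k : ℕ} : q.den ∣ k ↔ ∃ z : ℤ, (k : ℚ) * q = z := by
  have hd : (q.den : ℚ) ≠ 0 := by exact_mod_cast q.den_nz
  have key : (q.den : ℚ) * q = q.num := by
    rw [mul_comm]; exact Rat.mul_den_eq_num q
  constructor
  · rintro ⟨j, rfl⟩
    refine ⟨j * q.num, ?_⟩
    push_cast
    calc (q.den : ℚ) * j * q = (j : ℚ) * ((q.den : ℚ) * q) := by ring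
      _ = j * q.num := by rw [key]
  · rintro ⟨z, hz⟩
    have h1 : (k : ℚ) * q.num = z * q.den := by
      calc (k : ℚ) * q.num = (k : ℚ) * ((q.den : ℚ) * q) := by rw [key]
        _ = ((k : ℚ) * q) * q.den := by ring
        _ = z * q.den := by rw [hz]
    have h1' : (k : ℤ) * q.num = q.den * z := by
      have : ((k : ℤ) * q.num : ℚ) = ((q.den * z : ℤ) : ℚ) := by push_cast; linarith [h1]
      exact_mod_cast this
    have h2 : (q.den : ℤ) ∣ (k : ℤ) * q.num := ⟨z, h1'⟩
    have h3 : q.den ∣ k * q.num.natAbs := by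
      have := Int.natAbs_dvd_natAbs.2 h2
      simpa [Int.natAbs_mul] using this
    exact (Nat.Coprime.dvd_of_dvd_mul_right (q.reduced.symm) h3)

variable {n : Type*} [Fintype n] [Nonempty n]

/-- the (rescaled-to-`[0,1]`) line of index `m`. -/
def line (a b : n → ℕ) (m : n) (t : ℝ) : ℝ := (1 - t) * a m + t * b m

/-- crossing point of lines `m`, `m'` (as a rational). -/
def tq (a b : n → ℕ) (m m' : n) : ℚ :=
  (((a m : ℤ) : ℚ) - ((a m' : ℤ) : ℚ)) /
    ((((a m : ℤ) : ℚ) - ((a m' : ℤ) : ℚ)) - (((b m : ℤ) : ℚ) - ((b m' : ℤ) : ℚ)))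

def IsMin (a b : n → ℕ) (m : n) (t : ℝ) : Prop := ∀ m'', line a b m t ≤ line a b m'' t

/-- `(m, m')` is an *active crossing*: the lines have different slopes, cross
strictly inside `(0,1)`, and `m` is minimal there. -/
def Active (a b : n → ℕ) (m m' : n) : Prop :=
  ((b m : ℝ) - a m ≠ (b m' : ℝ) - a m') ∧
  0 < ((tq a b m m' : ℚ) : ℝ) ∧ ((tq a b m m' : ℚ) : ℝ) < 1 ∧
  IsMin a b m ((tq a b m m' : ℚ) : ℝ)

lemma line_sub (a b : n → ℕ) (m m' : n) (t : ℝ) :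
    line a b m t - line a b m' t =
      ((a m : ℝ) - a m') + (((b m : ℝ) - a m) - ((b m' : ℝ) - a m')) * t := by
  simp only [line]; ring

lemma cross_eq {a b : n → ℕ} {m m' : n}
    (h : (b m : ℝ) - a m ≠ (b m' : ℝ) - a m') :
    line a b m ((tq a b m m' : ℚ) : ℝ) = line a b m' ((tq a b m m' : ℚ) : ℝ) := by
  have hne : (((a m : ℝ) - a m') - ((b m : ℝ) - b m')) ≠ 0 := by
    intro hc; apply h; linarith
  have htq : ((tq a b m m' : ℚ) : ℝ)
      = ((a m : ℝ) - a m') / (((a m : ℝ) - a m') - ((b m : ℝ) - b m')) := by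
    simp only [tq]; push_cast; ring_nf
  rw [← sub_eq_zero, line_sub, htq]
  field_simp
  ring

set_option linter.unusedSectionVars false

section
variable {n : Type*} [Fintype n] [Nonempty n]

/-- The per-family property `P(k)`. -/
def Qp (a b : n → ℕ) (k : ℕ) : Prop :=
  ∀ r : ℕ, r + 1 ≤ k → ∃ m, IsMin a b m ((r : ℝ) / k) ∧ IsMin a b m (((r : ℝ) + 1) / k)

lemma nec {a b : n → ℕ} {k : ℕ} (hk : 0 < k) (hQ : Qp a b k)
    {m m' : n} (hA : Active a b m m') : (tq a b m m').den ∣ k := by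
  set q : ℚ := tq a b m m' with hq
  set t : ℝ := (q : ℝ) with htdef
  by_contra hnd
  have hkR : (0 : ℝ) < (k : ℝ) := by exact_mod_cast hk
  have hnz : ∀ z : ℤ, (k : ℝ) * t ≠ (z : ℝ) := by
    intro z hz
    refine hnd (den_dvd_iff.2 ⟨z, ?_⟩)
    have : (((k : ℚ) * q : ℚ) : ℝ) = ((z : ℤ) : ℝ) := by push_cast; exact hz
    exact_mod_cast this
  set ρ : ℤ := ⌊(k : ℝ) * t⌋ with hρ
  have h0 : 0 < (k : ℝ) * t := mul_pos hkR hA.2.1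
  have hρ0 : 0 ≤ ρ := Int.floor_nonneg.2 h0.le
  have hρk : ρ < (k : ℤ) := Int.floor_lt.2 (by
    have := hA.2.2.1
    calc (k : ℝ) * t < (k : ℝ) * 1 := by nlinarith
      _ = ((k : ℤ) : ℝ) := by push_cast; ring)
  set r : ℕ := ρ.toNat with hrdef
  have hrρ : (r : ℤ) = ρ := Int.toNat_of_nonneg hρ0
  have hr1 : r + 1 ≤ k := by omega
  obtain ⟨m'', h1, h2⟩ := hQ r hr1
  set x : ℝ := (r : ℝ) / k with hx
  set y : ℝ := ((r : ℝ) + 1) / k with hy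
  have hrR : (r : ℝ) = ((ρ : ℤ) : ℝ) := by exact_mod_cast hrρ
  have hfloor_le : ((ρ : ℤ) : ℝ) ≤ (k : ℝ) * t := Int.floor_le _
  have hfloor_lt : ((ρ : ℤ) : ℝ) < (k : ℝ) * t :=
    lt_of_le_of_ne hfloor_le (fun hc => hnz ρ hc.symm)
  have hxt : x < t := by rw [hx, div_lt_iff₀ hkR, hrR]; linarith
  have hty : t < y := by
    rw [hy, lt_div_iff₀ hkR, hrR]
    have := Int.lt_floor_add_one ((k : ℝ) * t)
    push_cast at this ⊢
    linarith
  -- φ = line m - line m''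
  have hφx : 0 ≤ ((a m : ℝ) - a m'') + (((b m : ℝ) - a m) - ((b m'' : ℝ) - a m'')) * x := by
    rw [← line_sub]; linarith [h1 m]
  have hφy : 0 ≤ ((a m : ℝ) - a m'') + (((b m : ℝ) - a m) - ((b m'' : ℝ) - a m'')) * y := by
    rw [← line_sub]; linarith [h2 m]
  have hφt : ((a m : ℝ) - a m'') + (((b m : ℝ) - a m) - ((b m'' : ℝ) - a m'')) * t = 0 := by
    have hge := interp hφx hφy hxt.le hty.le
    rw [← line_sub] at hge ⊢
    linarith [hA.2.2.2 m'']
  obtain ⟨hφx0, hφy0⟩ := pinch hφx hφy hxt hty hφt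
  -- ψ = line m' - line m''
  have hcross := cross_eq hA.1
  have hψx : 0 ≤ ((a m' : ℝ) - a m'') + (((b m' : ℝ) - a m') - ((b m'' : ℝ) - a m'')) * x := by
    rw [← line_sub]; linarith [h1 m']
  have hψy : 0 ≤ ((a m' : ℝ) - a m'') + (((b m' : ℝ) - a m') - ((b m'' : ℝ) - a m'')) * y := by
    rw [← line_sub]; linarith [h2 m']
  have hψt : ((a m' : ℝ) - a m'') + (((b m' : ℝ) - a m') - ((b m'' : ℝ) - a m'')) * t = 0 := by
    rw [← line_sub]
    have := line_sub a b m m'' t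
    rw [← htdef, ← hq] at *
    have hmt : line a b m' t = line a b m t := hcross.symm
    rw [hmt]
    rw [← line_sub] at hφt
    linarith
  obtain ⟨hψx0, hψy0⟩ := pinch hψx hψy hxt hty hψt
  -- now line m and line m' agree at x and y, forcing equal slopes
  rw [← line_sub] at hφx0 hφy0 hψx0 hψy0
  have hmm'x : ((a m : ℝ) - a m') + (((b m : ℝ) - a m) - ((b m' : ℝ) - a m')) * x = 0 := by
    rw [← line_sub]; linarith
  have hmm'y : ((a m : ℝ) - a m') + (((b m : ℝ) - a m) - ((b m' : ℝ) - a m')) * y = 0 := by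
    rw [← line_sub]; linarith
  have := slope_zero hmm'x hmm'y (ne_of_lt (lt_trans hxt hty))
  exact hA.1 (by linarith)

lemma suf {a b : n → ℕ} {k : ℕ} (hk : 0 < k)
    (hD : ∀ m m', Active a b m m' → (tq a b m m').den ∣ k) : Qp a b k := by
  classical
  intro r hr1
  have hkR : (0 : ℝ) < (k : ℝ) := by exact_mod_cast hk
  set x : ℝ := (r : ℝ) / k with hxdef
  set y : ℝ := ((r : ℝ) + 1) / k with hydef
  have hxy : x < y := by
    rw [hxdef, hydef, div_lt_div_iff_of_pos_right hkR]; linarith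
  have hx0 : 0 ≤ x := div_nonneg (by positivity) hkR.le
  have hy1 : y ≤ 1 := by
    rw [hydef, div_le_one hkR]
    have : ((r : ℝ) + 1) ≤ (k : ℝ) := by exact_mod_cast hr1
    linarith
  obtain ⟨mx, -, hmx⟩ := Finset.exists_min_image Finset.univ
    (fun m0 => line a b m0 x) Finset.univ_nonempty
  set S : Finset n := Finset.univ.filter (fun m0 => line a b m0 x ≤ line a b mx x) with hSdef
  have hSne : S.Nonempty := ⟨mx, by simp [hSdef]⟩
  obtain ⟨m₀, hm₀S, hm₀⟩ := Finset.exists_min_image S (fun m0 => line a b m0 y) hSne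
  have hm₀minx : IsMin a b m₀ x := fun m'' =>
    le_trans (Finset.mem_filter.1 hm₀S).2 (hmx m'' (Finset.mem_univ _))
  by_cases hT : ∃ nn, line a b nn y < line a b m₀ y
  swap
  · push_neg at hT
    exact ⟨m₀, hm₀minx, fun m'' => hT m''⟩
  exfalso
  have hii : ∀ nn, line a b nn y < line a b m₀ y → line a b m₀ x < line a b nn x := by
    intro nn hlt
    by_contra hle
    push_neg at hle
    have hnnS : nn ∈ S := Finset.mem_filter.2
      ⟨Finset.mem_univ _, le_trans hle (Finset.mem_filter.1 hm₀S).2⟩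
    exact absurd (hm₀ nn hnnS) (not_le.2 hlt)
  set T : Finset n := Finset.univ.filter (fun nn => line a b nn y < line a b m₀ y) with hTdef
  have hTne : T.Nonempty := by
    obtain ⟨nn, hnn⟩ := hT
    exact ⟨nn, Finset.mem_filter.2 ⟨Finset.mem_univ _, hnn⟩⟩
  set cr : n → ℝ := fun nn => ((tq a b m₀ nn : ℚ) : ℝ) with hcrdef
  have hkey : ∀ nn ∈ T, ((b m₀ : ℝ) - a m₀ ≠ (b nn : ℝ) - a nn) ∧ x < cr nn ∧ cr nn < y := by
    intro nn hnn
    have hlt : line a b nn y < line a b m₀ y := (Finset.mem_filter.1 hnn).2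
    have hgt : line a b m₀ x < line a b nn x := hii nn hlt
    have hne : (b m₀ : ℝ) - a m₀ ≠ (b nn : ℝ) - a nn := by
      intro hc
      have h1 := line_sub a b nn m₀ x
      have h2 := line_sub a b nn m₀ y
      rw [hc] at h1 h2
      simp only [sub_self, zero_mul, add_zero] at h1 h2
      linarith
    have hcr0 : line a b m₀ (cr nn) = line a b nn (cr nn) := cross_eq hne
    have hbx : 0 < ((a nn : ℝ) - a m₀) + (((b nn : ℝ) - a nn) - ((b m₀ : ℝ) - a m₀)) * x := by
      rw [← line_sub]; linarith
    have hby : ((a nn : ℝ) - a m₀) + (((b nn : ℝ) - a nn) - ((b m₀ : ℝ) - a m₀)) * y < 0 := by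
      rw [← line_sub]; linarith
    have hbt : ((a nn : ℝ) - a m₀) + (((b nn : ℝ) - a nn) - ((b m₀ : ℝ) - a m₀)) * (cr nn) = 0 := by
      rw [← line_sub]; linarith
    exact ⟨hne, between hbx hby hxy hbt⟩
  obtain ⟨m₁, hm₁T, hm₁⟩ := Finset.exists_min_image T cr hTne
  obtain ⟨hne₁, hxt1, ht1y⟩ := hkey m₁ hm₁T
  set t1 : ℝ := cr m₁ with ht1def
  have hAct : Active a b m₀ m₁ := by
    refine ⟨hne₁, lt_of_le_of_lt hx0 hxt1, lt_of_lt_of_le ht1y hy1, ?_⟩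
    intro m''
    show line a b m₀ t1 ≤ line a b m'' t1
    by_cases hmem : m'' ∈ T
    · obtain ⟨hne'', hx'', hy''⟩ := hkey m'' hmem
      have hle : t1 ≤ cr m'' := hm₁ m'' hmem
      have hcr0 : line a b m₀ (cr m'') = line a b m'' (cr m'') := cross_eq hne''
      have h1 : 0 ≤ ((a m'' : ℝ) - a m₀) + (((b m'' : ℝ) - a m'') - ((b m₀ : ℝ) - a m₀)) * x := by
        rw [← line_sub]; linarith [hii m'' (Finset.mem_filter.1 hmem).2]
      have h2 : 0 ≤ ((a m'' : ℝ) - a m₀) + (((b m'' : ℝ) - a m'') - ((b m₀ : ℝ) - a m₀)) * (cr m'') := by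
        rw [← line_sub]; linarith
      have := interp h1 h2 hxt1.le hle
      rw [← line_sub] at this
      linarith
    · have hyle : line a b m₀ y ≤ line a b m'' y := by
        by_contra hc
        exact hmem (Finset.mem_filter.2 ⟨Finset.mem_univ _, not_le.1 hc⟩)
      have h1 : 0 ≤ ((a m'' : ℝ) - a m₀) + (((b m'' : ℝ) - a m'') - ((b m₀ : ℝ) - a m₀)) * x := by
        rw [← line_sub]; linarith [hm₀minx m'']
      have h2 : 0 ≤ ((a m'' : ℝ) - a m₀) + (((b m'' : ℝ) - a m'') - ((b m₀ : ℝ) - a m₀)) * y := by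
        rw [← line_sub]; linarith
      have := interp h1 h2 hxt1.le ht1y.le
      rw [← line_sub] at this
      linarith
  obtain ⟨z, hz⟩ := den_dvd_iff.1 (hD m₀ m₁ hAct)
  have hzR : (k : ℝ) * t1 = (z : ℝ) := by
    have : (((k : ℚ) * tq a b m₀ m₁ : ℚ) : ℝ) = ((z : ℤ) : ℝ) := by exact_mod_cast hz
    push_cast at this
    exact this
  have hr1R : (r : ℝ) < (z : ℝ) := by
    have := (div_lt_iff₀ hkR).1 hxt1
    nlinarith [hzR]
  have hr2R : (z : ℝ) < (r : ℝ) + 1 := by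
    have := (lt_div_iff₀ hkR).1 ht1y
    nlinarith [hzR]
  have h1 : (r : ℤ) < z := by exact_mod_cast hr1R
  have h2 : z < (r : ℤ) + 1 := by exact_mod_cast hr2R
  omega

lemma min_iff {a b : n → ℕ} {k : ℕ} (hk : 0 < k) (ρ : ℝ) (m : n) :
    (Finset.univ.inf' Finset.univ_nonempty
        (fun m' => ((k : ℝ) - ρ) * (a m' : ℝ) + ρ * (b m' : ℝ))
          = ((k : ℝ) - ρ) * (a m : ℝ) + ρ * (b m : ℝ))
      ↔ IsMin a b m (ρ / k) := by
  have hkR : (0 : ℝ) < (k : ℝ) := by exact_mod_cast hk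
  have key : ∀ m'' : n, ((k : ℝ) - ρ) * a m'' + ρ * b m'' = k * line a b m'' (ρ / k) := by
    intro m''; simp only [line]; field_simp; try ring
  constructor
  · intro h m''
    have h1 : ((k : ℝ) - ρ) * a m + ρ * b m ≤ ((k : ℝ) - ρ) * a m'' + ρ * b m'' := by
      rw [← h]; exact Finset.inf'_le _ (Finset.mem_univ _)
    rw [key m, key m''] at h1
    exact le_of_mul_le_mul_left h1 hkR
  · intro h
    refine le_antisymm (Finset.inf'_le _ (Finset.mem_univ _)) (Finset.le_inf' _ _ ?_)
    intro m'' _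
    rw [key m, key m'']
    exact mul_le_mul_of_nonneg_left (h m'') hkR.le

open Classical in
noncomputable def denA (a b : n → ℕ) (m m' : n) : ℕ :=
  if Active a b m m' then (tq a b m m').den else 1

lemma denA_pos (a b : n → ℕ) (m m' : n) : 0 < denA a b m m' := by
  unfold denA; split
  · exact (tq a b m m').pos
  · exact one_pos

lemma denA_dvd_iff {a b : n → ℕ} {m m' : n} {k : ℕ} :
    denA a b m m' ∣ k ↔ (Active a b m m' → (tq a b m m').den ∣ k) := by
  unfold denA; split <;> rename_i h
  · simp [h]
  · simp [h]

/-- the per-family base-change order. -/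
noncomputable def kp (a b : n → ℕ) : ℕ :=
  (Finset.univ : Finset (n × n)).lcm fun q => denA a b q.1 q.2

set_option maxHeartbeats 1000000 in
lemma kp_pos (a b : n → ℕ) : 0 < kp a b := by
  rcases Nat.eq_zero_or_pos (kp a b) with h | h
  · exfalso
    rw [kp, Finset.lcm_eq_zero_iff] at h
    obtain ⟨q, -, hq⟩ := h
    exact (denA_pos a b q.1 q.2).ne' hq
  · exact h

set_option maxHeartbeats 1000000 in
lemma per (a b : n → ℕ) {k : ℕ} (hk : 0 < k) : Qp a b k ↔ kp a b ∣ k := by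
  constructor
  · intro hQ
    apply Finset.lcm_dvd
    intro q _
    exact denA_dvd_iff.2 fun hA => nec hk hQ hA
  · intro h
    apply suf hk
    intro m m' hA
    exact denA_dvd_iff.1 (dvd_trans (Finset.dvd_lcm (f := fun q : n × n => denA a b q.1 q.2) (Finset.mem_univ (m, m'))) h) hA

lemma stmt_iff (a b : n → ℕ) {k : ℕ} (hk : 0 < k) :
    (∀ r : ℕ, r + 1 ≤ k → ∃ m : n,
        Finset.univ.inf' Finset.univ_nonempty
            (fun m' => ((k : ℝ) - (r : ℝ)) * (a m' : ℝ) + (r : ℝ) * (b m' : ℝ))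
          = ((k : ℝ) - (r : ℝ)) * (a m : ℝ) + (r : ℝ) * (b m : ℝ) ∧
        Finset.univ.inf' Finset.univ_nonempty
            (fun m' => ((k : ℝ) - ((r : ℝ) + 1)) * (a m' : ℝ)
              + ((r : ℝ) + 1) * (b m' : ℝ))
          = ((k : ℝ) - ((r : ℝ) + 1)) * (a m : ℝ) + ((r : ℝ) + 1) * (b m : ℝ))
      ↔ Qp a b k := by
  unfold Qp
  exact forall_congr' fun r => imp_congr_right fun _ => exists_congr fun m =>
    and_congr (min_iff hk ((r : ℝ)) m) (min_iff hk ((r : ℝ) + 1) m)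

end
end Stmt15Aux

/-- For each `p ∈ {0,…,P-1}` let `(a_m^{(p)}, b_m^{(p)})` (`m` in a finite nonempty
index set `M_p`) be pairs of naturals, and for `k ≥ 1` define
`𝔐_k^{(p)}(r) = min_m ((k-r)a_m^{(p)} + r b_m^{(p)})`. Say `P_p(k)` holds if for
every integer `0 ≤ r ≤ k-1` some `m ∈ M_p` attains the minimum at both `r` and
`r+1`. Then there is a positive integer `k₀` such that for all `k ≥ 1`, `P_p(k)`
holds for all `p` iff `k₀ ∣ k`. -/
theorem stmt_15 (P : ℕ) (M : Fin P → Type*) [∀ p, Fintype (M p)] [∀ p, Nonempty (M p)]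
    (a b : ∀ p, M p → ℕ) :
    ∃ k₀ : ℕ, 0 < k₀ ∧ ∀ k : ℕ, 0 < k →
      ((∀ p : Fin P, ∀ r : ℕ, r + 1 ≤ k → ∃ m : M p,
          Finset.univ.inf' Finset.univ_nonempty
              (fun m' => ((k : ℝ) - (r : ℝ)) * (a p m' : ℝ) + (r : ℝ) * (b p m' : ℝ))
            = ((k : ℝ) - (r : ℝ)) * (a p m : ℝ) + (r : ℝ) * (b p m : ℝ) ∧
          Finset.univ.inf' Finset.univ_nonempty
              (fun m' => ((k : ℝ) - ((r : ℝ) + 1)) * (a p m' : ℝ)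
                + ((r : ℝ) + 1) * (b p m' : ℝ))
            = ((k : ℝ) - ((r : ℝ) + 1)) * (a p m : ℝ) + ((r : ℝ) + 1) * (b p m : ℝ))
        ↔ k₀ ∣ k) := by
  refine ⟨(Finset.univ : Finset (Fin P)).lcm (fun p => Stmt15Aux.kp (a p) (b p)), ?_, ?_⟩
  · rcases Nat.eq_zero_or_pos
        ((Finset.univ : Finset (Fin P)).lcm (fun p => Stmt15Aux.kp (a p) (b p))) with h | h
    · rw [Finset.lcm_eq_zero_iff] at h
      obtain ⟨p, -, hp⟩ := h
      exact absurd hp.symm (Stmt15Aux.kp_pos (a p) (b p)).ne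
    · exact h
  · intro k hk
    constructor
    · intro h
      apply Finset.lcm_dvd
      intro p _
      exact (Stmt15Aux.per (a p) (b p) hk).1 ((Stmt15Aux.stmt_iff (a p) (b p) hk).1 (h p))
    · intro h p
      refine (Stmt15Aux.stmt_iff (a p) (b p) hk).2 ((Stmt15Aux.per (a p) (b p) hk).2 ?_)
      exact dvd_trans
        (Finset.dvd_lcm (f := fun p => Stmt15Aux.kp (a p) (b p)) (Finset.mem_univ p)) h
end

section
/- Let (a_m, b_m), for m in a finite nonempty index set M, be pairs of natural numbers with a_m = 0 for at least one m ∈ M and b_m = 0 for at least one m ∈ M, let k be a positive integer, and define 𝔐_k(r) = min_{m∈M} ((k−r)·a_m + r·b_m). Suppose that for every integer r with 0 ≤ r ≤ k−1 there exists m ∈ M attaining the minimum at both r and r+1, i.e. 𝔐_k(r) = (k−r)·a_m + r·b_m and 𝔐_k(r+1) = (k−r−1)·a_m + (r+1)·b_m. Then ∑_{r=1}^{k−1} (2·𝔐_k(r) − 𝔐_k(r−1) − 𝔐_k(r+1)) = min{ b_m : a_m = 0 } + min{ a_m : b_m = 0 }. -/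
/-- Let `(a_m, b_m)` (`m` in a finite nonempty index set) be pairs of naturals with
`a_m = 0` for some `m` and `b_m = 0` for some `m`, `k ≥ 1`, and
`𝔐_k(r) = min_m ((k-r)a_m + r b_m)`. If for every integer `0 ≤ r ≤ k-1` some `m`
attains the minimum at both `r` and `r+1`, then
`∑_{r=1}^{k-1} (2𝔐_k(r) - 𝔐_k(r-1) - 𝔐_k(r+1))
  = min{ b_m : a_m = 0 } + min{ a_m : b_m = 0 }`. -/
theorem stmt_18 {M : Type*} [Fintype M] [Nonempty M] (a b : M → ℕ)
    (ha0 : ∃ m, a m = 0) (hb0 : ∃ m, b m = 0)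
    (k : ℕ) (hk : 0 < k) (𝔐 : ℝ → ℝ)
    (h𝔐 : ∀ r : ℝ, 𝔐 r = Finset.univ.inf' Finset.univ_nonempty
      (fun m => ((k : ℝ) - r) * (a m : ℝ) + r * (b m : ℝ)))
    (hgap : ∀ r : ℕ, r + 1 ≤ k → ∃ m : M,
      𝔐 (r : ℝ) = ((k : ℝ) - (r : ℝ)) * (a m : ℝ) + (r : ℝ) * (b m : ℝ) ∧
      𝔐 ((r : ℝ) + 1) = ((k : ℝ) - ((r : ℝ) + 1)) * (a m : ℝ)
        + ((r : ℝ) + 1) * (b m : ℝ)) :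
    ∑ r ∈ Finset.Icc 1 (k - 1),
        (2 * 𝔐 (r : ℝ) - 𝔐 ((r : ℝ) - 1) - 𝔐 ((r : ℝ) + 1))
      = (Nat.cast (sInf {x : ℕ | ∃ m, a m = 0 ∧ b m = x}) : ℝ)
        + (Nat.cast (sInf {x : ℕ | ∃ m, b m = 0 ∧ a m = x}) : ℝ) := by
  obtain ⟨m0, hm0⟩ := ha0
  obtain ⟨m1, hm1⟩ := hb0
  have hkR : (1 : ℝ) ≤ (k : ℝ) := by exact_mod_cast hk
  -- 𝔐 0 = 0
  have M0 : 𝔐 0 = 0 := by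
    rw [h𝔐]
    apply le_antisymm
    · refine le_trans (Finset.inf'_le _ (Finset.mem_univ m0)) ?_
      simp [hm0]
    · apply Finset.le_inf'
      intro m _
      simp only [sub_zero, zero_mul, add_zero]
      positivity
  -- 𝔐 k = 0
  have Mk : 𝔐 k = 0 := by
    rw [h𝔐]
    apply le_antisymm
    · refine le_trans (Finset.inf'_le _ (Finset.mem_univ m1)) ?_
      simp [hm1]
    · apply Finset.le_inf'
      intro m _
      have h : (k : ℝ) - k = 0 := by ring
      rw [h, zero_mul, zero_add]
      positivity
  -- 𝔐 1 = sInf {b m | a m = 0}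
  have hM1 : 𝔐 1 = (Nat.cast (sInf {x : ℕ | ∃ m, a m = 0 ∧ b m = x}) : ℝ) := by
    obtain ⟨m, h1, h2⟩ := hgap 0 hk
    simp only [Nat.cast_zero, sub_zero, zero_mul, add_zero, zero_add] at h1 h2
    rw [M0] at h1
    have ham : a m = 0 := by
      have hkne : (k : ℝ) ≠ 0 := by positivity
      have hz : (k : ℝ) * (a m : ℝ) = 0 := h1.symm
      rcases mul_eq_zero.mp hz with h | h
      · exact absurd h hkne
      · exact_mod_cast h
    have hMb : 𝔐 1 = (b m : ℝ) := by
      rw [h2, ham]; push_cast; ring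
    have hmem : b m ∈ {x : ℕ | ∃ m, a m = 0 ∧ b m = x} := ⟨m, ham, rfl⟩
    have hlb : ∀ x ∈ {x : ℕ | ∃ m, a m = 0 ∧ b m = x}, b m ≤ x := by
      rintro x ⟨m', ha', rfl⟩
      have : 𝔐 1 ≤ ((k : ℝ) - 1) * (a m' : ℝ) + 1 * (b m' : ℝ) := by
        rw [h𝔐]; exact Finset.inf'_le _ (Finset.mem_univ m')
      rw [hMb, ha'] at this
      simp only [Nat.cast_zero, mul_zero, zero_add, one_mul] at this
      exact_mod_cast this
    have : sInf {x : ℕ | ∃ m, a m = 0 ∧ b m = x} = b m :=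
      le_antisymm (Nat.sInf_le hmem) (le_csInf ⟨_, hmem⟩ hlb)
    rw [this, hMb]
  -- 𝔐 (k-1) = sInf {a m | b m = 0}
  have hMk1 : 𝔐 ((k : ℝ) - 1) = (Nat.cast (sInf {x : ℕ | ∃ m, b m = 0 ∧ a m = x}) : ℝ) := by
    obtain ⟨m, h1, h2⟩ := hgap (k - 1) (by omega)
    have hc : ((k - 1 : ℕ) : ℝ) = (k : ℝ) - 1 := by
      push_cast [Nat.cast_sub hk]; ring
    rw [hc] at h1 h2
    have hc2 : (k : ℝ) - 1 + 1 = (k : ℝ) := by ring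
    rw [hc2] at h2
    rw [Mk] at h2
    have hbm : b m = 0 := by
      have : ((k : ℝ) - (k : ℝ)) * (a m : ℝ) = 0 := by ring_nf
      rw [this, zero_add] at h2
      have hkne : (k : ℝ) ≠ 0 := by positivity
      have hz : (k : ℝ) * (b m : ℝ) = 0 := by linarith [h2]
      rcases mul_eq_zero.mp hz with h | h
      · exact absurd h hkne
      · exact_mod_cast h
    have hMa : 𝔐 ((k : ℝ) - 1) = (a m : ℝ) := by
      rw [h1, hbm]; push_cast; ring
    have hmem : a m ∈ {x : ℕ | ∃ m, b m = 0 ∧ a m = x} := ⟨m, hbm, rfl⟩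
    have hlb : ∀ x ∈ {x : ℕ | ∃ m, b m = 0 ∧ a m = x}, a m ≤ x := by
      rintro x ⟨m', hb', rfl⟩
      have : 𝔐 ((k : ℝ) - 1) ≤ ((k : ℝ) - ((k : ℝ) - 1)) * (a m' : ℝ)
          + ((k : ℝ) - 1) * (b m' : ℝ) := by
        rw [h𝔐]; exact Finset.inf'_le _ (Finset.mem_univ m')
      rw [hMa, hb'] at this
      simp only [Nat.cast_zero, mul_zero, add_zero] at this
      have h3 : (k : ℝ) - ((k : ℝ) - 1) = 1 := by ring
      rw [h3, one_mul] at this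
      exact_mod_cast this
    have : sInf {x : ℕ | ∃ m, b m = 0 ∧ a m = x} = a m :=
      le_antisymm (Nat.sInf_le hmem) (le_csInf ⟨_, hmem⟩ hlb)
    rw [this, hMa]
  -- telescoping
  set g : ℕ → ℝ := fun n => 𝔐 (n : ℝ) with hg
  have hsum : ∑ r ∈ Finset.Icc 1 (k - 1),
      (2 * 𝔐 (r : ℝ) - 𝔐 ((r : ℝ) - 1) - 𝔐 ((r : ℝ) + 1))
      = ∑ i ∈ Finset.range (k - 1),
        ((g (i + 1) - g i) - (g (i + 2) - g (i + 1))) := by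
    have hIcc : Finset.Icc 1 (k - 1) = Finset.Ico 1 k := by
      rw [← Finset.Ico_add_one_right_eq_Icc]; congr 1; omega
    rw [hIcc, Finset.sum_Ico_eq_sum_range]
    apply Finset.sum_congr rfl
    intro i _
    have e1 : ((1 + i : ℕ) : ℝ) - 1 = ((i : ℕ) : ℝ) := by push_cast; ring
    have e2 : ((1 + i : ℕ) : ℝ) + 1 = ((i + 2 : ℕ) : ℝ) := by push_cast; ring
    have e3 : ((1 + i : ℕ) : ℝ) = ((i + 1 : ℕ) : ℝ) := by push_cast; ring
    rw [e1, e2, e3]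
    simp only [hg]
    ring
  rw [hsum]
  have htel : ∑ i ∈ Finset.range (k - 1),
      ((g (i + 1) - g i) - (g (i + 2) - g (i + 1)))
      = (g 1 - g 0) - (g ((k - 1) + 1) - g (k - 1)) := by
    exact Finset.sum_range_sub' (fun i => g (i + 1) - g i) (k - 1)
  rw [htel]
  have hk1 : (k - 1) + 1 = k := by omega
  rw [hk1]
  have hg0 : g 0 = 0 := by simpa [hg] using M0
  have hgk : g k = 0 := Mk
  have hg1 : g 1 = (Nat.cast (sInf {x : ℕ | ∃ m, a m = 0 ∧ b m = x}) : ℝ) := by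
    simpa [hg] using hM1
  have hgk1 : g (k - 1) = (Nat.cast (sInf {x : ℕ | ∃ m, b m = 0 ∧ a m = x}) : ℝ) := by
    have hc : ((k - 1 : ℕ) : ℝ) = (k : ℝ) - 1 := by push_cast [Nat.cast_sub hk]; ring
    simp only [hg, hc]
    exact hMk1
  rw [hg0, hgk, hg1, hgk1]
  ring
end
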